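/- arXiv:2310.07045 — 5 statements merged into one kernel-verified Lean document; each statement's English description precedes it below -/
import Mathlib

section
/- Let (G_n) be an FO-convergent sequence of finite graphs with a modeling limit L, and let r be an algebraic vertex of L. Then there exists a sequence (r_n) with r_n ∈ V(G_n) such that the rooted sequence (G_n, r_n) FO-converges to (L, r). -/
open FirstOrder Language MeasureTheory Filter

/-- The set of solutions of a formula `φ` in `p` free variables in a graph. -/
def solSet {V : Type} (G : SimpleGraph V) {p : ℕ}
    (φ : Language.graph.Formula (Fin p)) : Set (Fin p → V) :=
  letI := G.structure
  {v | φ.Realize v}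

/-- The set of solutions of a rooted formula `φ(x₁,…,x_p,y)` with the root variable `y`
interpreted as `r`. -/
def solSetR {V : Type} (G : SimpleGraph V) {p : ℕ}
    (φ : Language.graph.Formula (Fin (p + 1))) (r : V) : Set (Fin p → V) :=
  letI := G.structure
  {v | φ.Realize (Fin.snoc v r)}

/-- The set of solutions of a one-variable formula. -/
def sol1 {V : Type} (G : SimpleGraph V) (ξ : Language.graph.Formula (Fin 1)) : Set V :=
  letI := G.structure
  {v : V | ξ.Realize (fun _ => v)}

/-- Stone pairing `⟨φ,G⟩` of a formula and a finite graph. -/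
noncomputable def stoneG {V : Type} (fV : Fintype V) (G : SimpleGraph V) {p : ℕ}
    (φ : Language.graph.Formula (Fin p)) : ℝ :=
  (Nat.card (solSet G φ) : ℝ) / (Fintype.card V : ℝ) ^ p

/-- Rooted Stone pairing `⟨φ,(G,r)⟩` of a rooted formula and a finite graph with root `r`. -/
noncomputable def stoneGR {V : Type} (fV : Fintype V) (G : SimpleGraph V) {p : ℕ}
    (φ : Language.graph.Formula (Fin (p + 1))) (r : V) : ℝ :=
  (Nat.card (solSetR G φ r) : ℝ) / (Fintype.card V : ℝ) ^ p

/-- Stone pairing `⟨φ,L⟩` of a formula and a modeling. -/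
noncomputable def stoneL {W : Type} [MeasurableSpace W] (L : SimpleGraph W)
    (ν : Measure W) {p : ℕ} (φ : Language.graph.Formula (Fin p)) : ℝ :=
  ((Measure.pi fun _ : Fin p => ν) (solSet L φ)).toReal

/-- Rooted Stone pairing `⟨φ,(L,r)⟩` of a rooted formula and a modeling with root `r`. -/
noncomputable def stoneLR {W : Type} [MeasurableSpace W] (L : SimpleGraph W)
    (ν : Measure W) {p : ℕ} (φ : Language.graph.Formula (Fin (p + 1))) (r : W) : ℝ :=
  ((Measure.pi fun _ : Fin p => ν) (solSetR L φ r)).toReal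

/-!
Fix an algebraic formula `ξ` with `r ∈ ξ(L)` and let `k = |ξ(L)|`. The sentence "at least `k + 1`
vertices satisfy `ξ`" fails in `L`, hence eventually in `Gₙ`, so `|ξ(Gₙ)| ≤ k`. For a rooted
formula `χ` whose root always satisfies `ξ`,
`∑_{s ∈ ξ(G)} ⟨χ,(G,s)⟩ = ∑_{i<k} ⟨∃^{≥i+1} y χ(x̄,y), G⟩` is a sum of plain Stone pairings, and
conjoining rooted formulas on disjoint variables multiplies rooted pairings. Hence
`∑_{s ∈ ξ(Gₙ)} P(⟨φⱼ,(Gₙ,s)⟩ⱼ) → ∑_{s ∈ ξ(L)} P(⟨φⱼ,(L,s)⟩ⱼ)` for every polynomial `P`. Taking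
for `P` a high power of the bump `∏ⱼ (1 - (xⱼ - ⟨φⱼ,(L,r)⟩)²)`, which is `1` at the profile of `r`,
shows that for any finitely many formulas and `ε > 0`, eventually some root of `Gₙ` has all its
pairings `ε`-close to those of `r`. A diagonal choice over the countably many rooted formulas
gives `(rₙ)`. Finite graphs are treated as modelings with the uniform measure.
-/

open Topology

/-- Formulas `φ(x₁,…,x_p,y)`; the last variable is the root. -/
abbrev RootedFormula := Σ p : ℕ, Language.graph.Formula (Fin (p + 1))

/-- `ψ(x̄, y) ∧ χ(z̄, y)`, with the non-root variables of `ψ` and `χ` kept apart. -/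
def RootedFormula.conj (ψ χ : RootedFormula) : RootedFormula :=
  ⟨ψ.1 + χ.1,
    ψ.2.relabel (Fin.snoc (fun i => (Fin.castAdd χ.1 i).castSucc) (Fin.last _)) ⊓
      χ.2.relabel (Fin.snoc (fun j => (Fin.natAdd ψ.1 j).castSucc) (Fin.last _))⟩

/-- `ξ(y) ∧ ⋀_{φ ∈ l} φ(x̄_φ, y)`, with the non-root variables of the conjuncts kept apart. -/
def RootedFormula.conjList (ξ : Language.graph.Formula (Fin 1)) (l : List RootedFormula) :
    RootedFormula :=
  l.foldr RootedFormula.conj ⟨0, ξ⟩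

/-- `∃ y₁ … yᵢ` pairwise distinct with `χ(x̄, yₗ)` for all `l`. -/
noncomputable def existsAtLeast {q : ℕ} (i : ℕ) (χ : Language.graph.Formula (Fin (q + 1))) :
    Language.graph.Formula (Fin q) :=
  Formula.iExs (Fin i) <|
    (Formula.iInf fun l : Fin i => χ.relabel (Fin.snoc Sum.inl (Sum.inr l))) ⊓
      Formula.iInf fun a : {a : Fin i × Fin i // a.1 ≠ a.2} =>
        ((Term.var (Sum.inr a.1.1)).equal (Term.var (Sum.inr a.1.2))).not

section Semantics

variable {M : Type} (H : SimpleGraph M)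

theorem mem_solSet_existsAtLeast {q i : ℕ} (χ : Language.graph.Formula (Fin (q + 1)))
    (v : Fin q → M) :
    v ∈ solSet H (existsAtLeast i χ) ↔
      ∃ f : Fin i → M, f.Injective ∧ ∀ l, v ∈ solSetR H χ (f l) := by
  let := H.structure
  simp only [solSet, solSetR, existsAtLeast, Set.mem_ofPred_eq, Formula.realize_iExs,
    Formula.realize_inf, Formula.realize_iInf, Formula.realize_relabel, Formula.realize_not,
    Formula.realize_equal, Term.realize_var, Sum.elim_inr, Fin.comp_snoc, Sum.elim_comp_inl]
  refine exists_congr fun f => and_comm.trans (and_congr_left' ⟨fun h a b hab => ?_, ?_⟩)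
  · by_contra hne
    exact h ⟨(a, b), hne⟩ hab
  · rintro h ⟨⟨a, b⟩, hne⟩ hab
    exact hne (h hab)

theorem mem_solSetR_conj (ψ χ : RootedFormula) (s : M) (v : Fin (ψ.1 + χ.1) → M) :
    v ∈ solSetR H (ψ.conj χ).2 s ↔
      v ∘ Fin.castAdd χ.1 ∈ solSetR H ψ.2 s ∧ v ∘ Fin.natAdd ψ.1 ∈ solSetR H χ.2 s := by
  let := H.structure
  have hψ : Fin.snoc v s ∘ Fin.snoc (fun i => (Fin.castAdd χ.1 i).castSucc) (Fin.last _) =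
      Fin.snoc (v ∘ Fin.castAdd χ.1) s := by
    ext j; induction j using Fin.lastCases <;> simp
  have hχ : Fin.snoc v s ∘ Fin.snoc (fun j => (Fin.natAdd ψ.1 j).castSucc) (Fin.last _) =
      Fin.snoc (v ∘ Fin.natAdd ψ.1) s := by
    ext j; induction j using Fin.lastCases <;> simp [-Fin.castSucc_natAdd]
  show Formula.Realize (_ ⊓ _) (Fin.snoc v s) ↔ ψ.2.Realize _ ∧ χ.2.Realize _
  rw [Formula.realize_inf, Formula.realize_relabel, Formula.realize_relabel, hψ, hχ]

theorem mem_solSetR_root (ξ : Language.graph.Formula (Fin 1)) (s : M) (v : Fin 0 → M) :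
    v ∈ solSetR H (p := 0) ξ s ↔ s ∈ sol1 H ξ := by
  have : (Fin.snoc v s : Fin 1 → M) = fun _ => s :=
    funext fun i => by rw [Fin.fin_one_eq_zero i]; rfl
  simp only [solSetR, sol1, Set.mem_ofPred_eq, this]

theorem mem_sol1_of_mem_solSetR_conjList (ξ : Language.graph.Formula (Fin 1))
    (l : List RootedFormula) {s : M} {v : Fin (RootedFormula.conjList ξ l).1 → M}
    (hv : v ∈ solSetR H (RootedFormula.conjList ξ l).2 s) : s ∈ sol1 H ξ := by
  induction l with
  | nil => exact (mem_solSetR_root H ξ s v).1 hv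
  | cons φ l ih => exact ih ((mem_solSetR_conj H _ _ s v).1 hv).2

theorem exists_injective_mem_iff_le_card (T : Finset M) (i : ℕ) :
    (∃ f : Fin i → M, f.Injective ∧ ∀ l, f l ∈ T) ↔ i ≤ T.card := by
  refine ⟨fun ⟨f, hf, hT⟩ => ?_, fun h => ?_⟩
  · simpa using Finset.card_le_card_of_injOn (s := Finset.univ) f (fun l _ => hT l) hf.injOn
  · obtain ⟨e⟩ := Function.Embedding.nonempty_of_card_le (α := Fin i) (β := T) (by simpa)
    exact ⟨(↑) ∘ e, Subtype.val_injective.comp e.injective, fun l => (e l).2⟩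

open Classical in
theorem mem_solSet_existsAtLeast_iff_le_card {q : ℕ} (χ : Language.graph.Formula (Fin (q + 1)))
    (S : Finset M) (hS : ∀ v s, v ∈ solSetR H χ s → s ∈ S) (i : ℕ) (v : Fin q → M) :
    v ∈ solSet H (existsAtLeast i χ) ↔ i ≤ (S.filter fun s => v ∈ solSetR H χ s).card := by
  rw [mem_solSet_existsAtLeast, ← exists_injective_mem_iff_le_card]
  simp only [Finset.mem_filter]
  exact exists_congr fun f => and_congr_right fun _ =>
    forall_congr' fun l => ⟨fun h => ⟨hS v _ h, h⟩, And.right⟩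

theorem mem_solSet_existsAtLeast_root {ξ : Language.graph.Formula (Fin 1)}
    (hfin : (sol1 H ξ).Finite) (i : ℕ) (v : Fin 0 → M) :
    v ∈ solSet H (existsAtLeast i (q := 0) ξ) ↔ i ≤ (sol1 H ξ).ncard := by
  simp only [mem_solSet_existsAtLeast, mem_solSetR_root, Set.ncard_eq_toFinset_card _ hfin,
    ← exists_injective_mem_iff_le_card, Set.Finite.mem_toFinset]

theorem sum_indicator_existsAtLeast {R : Type*} [AddCommMonoidWithOne R] {q : ℕ}
    (χ : Language.graph.Formula (Fin (q + 1))) (S : Finset M)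
    (hS : ∀ v s, v ∈ solSetR H χ s → s ∈ S) {k : ℕ} (hk : S.card ≤ k) (v : Fin q → M) :
    ∑ i ∈ Finset.range k, (solSet H (existsAtLeast (i + 1) χ)).indicator 1 v =
      ∑ s ∈ S, (solSetR H χ s).indicator (1 : (Fin q → M) → R) v := by
  classical
  have hle := (Finset.card_filter_le S fun s => v ∈ solSetR H χ s).trans hk
  simp only [Set.indicator_apply, Pi.one_apply, Finset.sum_boole,
    mem_solSet_existsAtLeast_iff_le_card H χ S hS, Nat.add_one_le_iff]
  have hrange : ∀ t ≤ k, ((Finset.range k).filter (· < t)).card = t := fun t ht => by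
    rw [show (Finset.range k).filter (· < t) = Finset.range t by ext; simp; omega]
    exact Finset.card_range t
  rw [hrange _ hle]

end Semantics

section Modeling

variable {W : Type} [MeasurableSpace W] {L : SimpleGraph W} (μ : Measure W)

theorem measurableSet_solSetR
    (hmeas : ∀ (p : ℕ) (φ : Language.graph.Formula (Fin p)), MeasurableSet (solSet L φ))
    {p : ℕ} (φ : Language.graph.Formula (Fin (p + 1))) (s : W) :
    MeasurableSet (solSetR L φ s) :=
  (hmeas _ φ).preimage <| measurable_pi_lambda _ fun i => by
    induction i using Fin.lastCases with
    | last => simp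
    | cast i => simpa using measurable_pi_apply i

theorem measure_pi_comp_castAdd_mem_and_comp_natAdd_mem [SigmaFinite μ] {a b : ℕ}
    {A : Set (Fin a → W)} {B : Set (Fin b → W)} (hA : MeasurableSet A) (hB : MeasurableSet B) :
    Measure.pi (fun _ => μ) {v : Fin (a + b) → W | v ∘ Fin.castAdd b ∈ A ∧ v ∘ Fin.natAdd a ∈ B} =
      Measure.pi (fun _ => μ) A * Measure.pi (fun _ => μ) B := by
  have hsplit := (measurePreserving_sumPiEquivProdPi fun _ : Fin a ⊕ Fin b => μ).comp
    (measurePreserving_piCongrLeft (fun _ => μ) finSumFinEquiv).symm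
  rw [← Measure.prod_prod, ← hsplit.measure_preimage (hA.prod hB).nullMeasurableSet]
  rfl

theorem stoneLR_conj [SigmaFinite μ]
    (hmeas : ∀ (p : ℕ) (φ : Language.graph.Formula (Fin p)), MeasurableSet (solSet L φ))
    (ψ χ : RootedFormula) (s : W) :
    stoneLR L μ (ψ.conj χ).2 s = stoneLR L μ ψ.2 s * stoneLR L μ χ.2 s := by
  have hset : (solSetR L (ψ.conj χ).2 s : Set (Fin (ψ.1 + χ.1) → W)) =
      {v | v ∘ Fin.castAdd χ.1 ∈ solSetR L ψ.2 s ∧ v ∘ Fin.natAdd ψ.1 ∈ solSetR L χ.2 s} :=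
    Set.ext (mem_solSetR_conj L ψ χ s)
  show (Measure.pi (fun _ : Fin (ψ.1 + χ.1) => μ) (solSetR L (ψ.conj χ).2 s)).toReal = _
  rw [hset, measure_pi_comp_castAdd_mem_and_comp_natAdd_mem μ
    (measurableSet_solSetR hmeas _ s) (measurableSet_solSetR hmeas _ s), ENNReal.toReal_mul]
  rfl

theorem stoneLR_conjList [IsProbabilityMeasure μ]
    (hmeas : ∀ (p : ℕ) (φ : Language.graph.Formula (Fin p)), MeasurableSet (solSet L φ))
    (ξ : Language.graph.Formula (Fin 1)) (l : List RootedFormula) {s : W} (hs : s ∈ sol1 L ξ) :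
    stoneLR L μ (RootedFormula.conjList ξ l).2 s = (l.map fun φ => stoneLR L μ φ.2 s).prod := by
  induction l with
  | nil =>
    have : solSetR L (p := 0) ξ s = Set.univ := Set.eq_univ_of_forall fun v =>
      (mem_solSetR_root L ξ s v).2 hs
    show (Measure.pi (fun _ : Fin 0 => μ) (solSetR L (p := 0) ξ s)).toReal = 1
    rw [this, measure_univ, ENNReal.toReal_one]
  | cons φ l ih =>
    show stoneLR L μ (φ.conj (RootedFormula.conjList ξ l)).2 s = _
    rw [stoneLR_conj μ hmeas, ih, List.map_cons, List.prod_cons]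

theorem sum_stoneL_existsAtLeast [IsFiniteMeasure μ]
    (hmeas : ∀ (p : ℕ) (φ : Language.graph.Formula (Fin p)), MeasurableSet (solSet L φ))
    {q : ℕ} (χ : Language.graph.Formula (Fin (q + 1))) (S : Finset W)
    (hS : ∀ v s, v ∈ solSetR L χ s → s ∈ S) {k : ℕ} (hk : S.card ≤ k) :
    ∑ i ∈ Finset.range k, stoneL L μ (existsAtLeast (i + 1) χ) = ∑ s ∈ S, stoneLR L μ χ s := by
  simp only [stoneL, stoneLR]
  rw [← ENNReal.toReal_sum fun _ _ => measure_ne_top _ _,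
    ← ENNReal.toReal_sum fun _ _ => measure_ne_top _ _]
  congr 1
  simp only [← lintegral_indicator_one (hmeas _ _),
    ← lintegral_indicator_one (measurableSet_solSetR hmeas χ _)]
  rw [← lintegral_finsetSum _ fun i _ => measurable_one.indicator (hmeas _ _),
    ← lintegral_finsetSum _ fun s _ => measurable_one.indicator (measurableSet_solSetR hmeas χ s)]
  exact lintegral_congr (sum_indicator_existsAtLeast L χ S hS hk)

theorem sum_stoneL_existsAtLeast_conjList [IsProbabilityMeasure μ]
    (hmeas : ∀ (p : ℕ) (φ : Language.graph.Formula (Fin p)), MeasurableSet (solSet L φ))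
    (ξ : Language.graph.Formula (Fin 1)) (hfin : (sol1 L ξ).Finite) (l : List RootedFormula)
    {k : ℕ} (hk : (sol1 L ξ).ncard ≤ k) :
    ∑ i ∈ Finset.range k, stoneL L μ (existsAtLeast (i + 1) (RootedFormula.conjList ξ l).2) =
      ∑ s ∈ hfin.toFinset, (l.map fun φ => stoneLR L μ φ.2 s).prod := by
  rw [sum_stoneL_existsAtLeast μ hmeas _ hfin.toFinset
    (fun _ _ hv => hfin.mem_toFinset.2 (mem_sol1_of_mem_solSetR_conjList L ξ l hv))
    (by rwa [← Set.ncard_eq_toFinset_card _ hfin])]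
  exact Finset.sum_congr rfl fun s hs => stoneLR_conjList μ hmeas ξ l (hfin.mem_toFinset.1 hs)

theorem stoneLR_mem_Icc [IsProbabilityMeasure μ] {p : ℕ} (φ : Language.graph.Formula (Fin (p + 1)))
    (s : W) : stoneLR L μ φ s ∈ Set.Icc 0 1 :=
  ⟨ENNReal.toReal_nonneg, ENNReal.toReal_le_of_le_ofReal zero_le_one (by simpa using prob_le_one)⟩

end Modeling

section FiniteGraph

variable {M : Type} (fM : Fintype M)

theorem card_div_card_pow_eq_measure_uniformOn [MeasurableSpace M] [MeasurableSingletonClass M]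
    {p : ℕ} (A : Set (Fin p → M)) :
    (Nat.card A : ℝ) / (Fintype.card M : ℝ) ^ p =
      (Measure.pi (fun _ => ProbabilityTheory.uniformOn (Set.univ : Set M)) A).toReal := by
  rw [← ProbabilityTheory.uniformOn_pi, Set.pi_univ, ProbabilityTheory.uniformOn_univ,
    Measure.count_apply_finite _ A.toFinite]
  simp [ENNReal.toReal_div, Nat.card_coe_set_eq, Set.ncard_eq_toFinset_card _ A.toFinite]

theorem stoneG_eq_stoneL [MeasurableSpace M] [MeasurableSingletonClass M] (H : SimpleGraph M)
    {p : ℕ} (φ : Language.graph.Formula (Fin p)) :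
    stoneG fM H φ = stoneL H (ProbabilityTheory.uniformOn Set.univ) φ :=
  card_div_card_pow_eq_measure_uniformOn fM _

theorem stoneGR_eq_stoneLR [MeasurableSpace M] [MeasurableSingletonClass M] (H : SimpleGraph M)
    {p : ℕ} (φ : Language.graph.Formula (Fin (p + 1))) (s : M) :
    stoneGR fM H φ s = stoneLR H (ProbabilityTheory.uniformOn Set.univ) φ s :=
  card_div_card_pow_eq_measure_uniformOn fM _

variable [Nonempty M]

theorem sum_stoneG_existsAtLeast_conjList (H : SimpleGraph M)
    (ξ : Language.graph.Formula (Fin 1)) (l : List RootedFormula) {k : ℕ}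
    (hk : (sol1 H ξ).ncard ≤ k) :
    ∑ i ∈ Finset.range k, stoneG fM H (existsAtLeast (i + 1) (RootedFormula.conjList ξ l).2) =
      ∑ s ∈ (sol1 H ξ).toFinite.toFinset, (l.map fun φ => stoneGR fM H φ.2 s).prod := by
  let : MeasurableSpace M := ⊤
  simp only [stoneG_eq_stoneL, stoneGR_eq_stoneLR]
  exact sum_stoneL_existsAtLeast_conjList _ (fun _ _ => (Set.toFinite _).measurableSet) ξ _ l hk

theorem stoneGR_mem_Icc (H : SimpleGraph M) {p : ℕ} (φ : Language.graph.Formula (Fin (p + 1)))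
    (s : M) : stoneGR fM H φ s ∈ Set.Icc 0 1 := by
  let : MeasurableSpace M := ⊤
  rw [stoneGR_eq_stoneLR]
  exact stoneLR_mem_Icc _ φ s

end FiniteGraph

section Bump

open MvPolynomial

theorem Finsupp.prod_map_toMultiset {ι R : Type*} [CommMonoid R] (d : ι →₀ ℕ) (x : ι → R) :
    (d.toMultiset.map x).prod = ∏ i ∈ d.support, x i ^ d i := by
  classical
  rw [Finset.prod_multiset_map_count, Finsupp.toFinset_toMultiset]
  simp only [Finsupp.count_toMultiset]

variable {ι : Type*} [Fintype ι]

noncomputable def bumpPoly (c : ι → ℝ) : MvPolynomial ι ℝ :=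
  ∏ i, (1 - (X i - C (c i)) ^ 2)

theorem eval_bumpPoly (c x : ι → ℝ) : eval x (bumpPoly c) = ∏ i, (1 - (x i - c i) ^ 2) := by
  simp [bumpPoly]

theorem one_sub_sq_sub_mem_Icc {x c : ℝ} (hx : x ∈ Set.Icc 0 1) (hc : c ∈ Set.Icc 0 1) :
    1 - (x - c) ^ 2 ∈ Set.Icc 0 1 :=
  ⟨by nlinarith [hx.1, hx.2, hc.1, hc.2], by nlinarith⟩

theorem prod_one_sub_sq_sub_nonneg {x c : ι → ℝ} (hx : ∀ i, x i ∈ Set.Icc 0 1)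
    (hc : ∀ i, c i ∈ Set.Icc 0 1) : 0 ≤ ∏ i, (1 - (x i - c i) ^ 2) :=
  Finset.prod_nonneg fun i _ => (one_sub_sq_sub_mem_Icc (hx i) (hc i)).1

theorem prod_one_sub_sq_sub_le {x c : ι → ℝ} (hx : ∀ i, x i ∈ Set.Icc 0 1)
    (hc : ∀ i, c i ∈ Set.Icc 0 1) {ε : ℝ} (hε : 0 ≤ ε) {j : ι} (hj : ε ≤ |x j - c j|) :
    ∏ i, (1 - (x i - c i) ^ 2) ≤ 1 - ε ^ 2 := by
  classical
  have hmem i := one_sub_sq_sub_mem_Icc (hx i) (hc i)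
  have hεj : ε ^ 2 ≤ (x j - c j) ^ 2 := by simpa using pow_le_pow_left₀ hε hj 2
  calc ∏ i, (1 - (x i - c i) ^ 2)
      = (1 - (x j - c j) ^ 2) * ∏ i ∈ Finset.univ.erase j, (1 - (x i - c i) ^ 2) :=
        (Finset.mul_prod_erase _ _ (Finset.mem_univ j)).symm
    _ ≤ (1 - (x j - c j) ^ 2) * 1 :=
        mul_le_mul_of_nonneg_left (Finset.prod_le_one (fun i _ => (hmem i).1)
          fun i _ => (hmem i).2) (hmem j).1
    _ ≤ 1 - ε ^ 2 := by linarith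

end Bump

section Convergence

variable {V : ℕ → Type} (fV : ∀ n, Fintype (V n)) (G : ∀ n, SimpleGraph (V n))
  {W : Type} [MeasurableSpace W] {L : SimpleGraph W} {ν : Measure W}

theorem eventually_ncard_sol1_le
    (hlim : ∀ (p : ℕ) (φ : Language.graph.Formula (Fin p)),
      Tendsto (fun n => stoneG (fV n) (G n) φ) atTop (𝓝 (stoneL L ν φ)))
    {ξ : Language.graph.Formula (Fin 1)} (hfin : (sol1 L ξ).Finite) :
    ∀ᶠ n in atTop, (sol1 (G n) ξ).ncard ≤ (sol1 L ξ).ncard := by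
  set θ := existsAtLeast ((sol1 L ξ).ncard + 1) (q := 0) ξ
  have hL : solSet L θ = ∅ := Set.eq_empty_of_forall_notMem fun v hv => by
    simpa using (mem_solSet_existsAtLeast_root L hfin _ v).1 hv
  have hθ := hlim 0 θ
  rw [stoneL, hL, measure_empty, ENNReal.toReal_zero] at hθ
  filter_upwards [hθ.eventually (gt_mem_nhds one_pos)] with n hn
  by_contra! h
  have hG : solSet (G n) θ = Set.univ := Set.eq_univ_of_forall fun v =>
    (mem_solSet_existsAtLeast_root (G n) (Set.toFinite _) _ v).2 h
  simp [stoneG, hG] at hn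

variable [IsProbabilityMeasure ν] [∀ n, Nonempty (V n)]

theorem tendsto_sum_prod_stoneGR
    (hmeas : ∀ (p : ℕ) (φ : Language.graph.Formula (Fin p)), MeasurableSet (solSet L φ))
    (hlim : ∀ (p : ℕ) (φ : Language.graph.Formula (Fin p)),
      Tendsto (fun n => stoneG (fV n) (G n) φ) atTop (𝓝 (stoneL L ν φ)))
    {ξ : Language.graph.Formula (Fin 1)} (hfin : (sol1 L ξ).Finite) (l : List RootedFormula) :
    Tendsto (fun n => ∑ s ∈ (sol1 (G n) ξ).toFinite.toFinset,
        (l.map fun φ => stoneGR (fV n) (G n) φ.2 s).prod) atTop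
      (𝓝 (∑ s ∈ hfin.toFinset, (l.map fun φ => stoneLR L ν φ.2 s).prod)) := by
  rw [← sum_stoneL_existsAtLeast_conjList ν hmeas ξ hfin l le_rfl]
  refine (tendsto_finsetSum _ fun i _ => hlim _ _).congr' ?_
  filter_upwards [eventually_ncard_sol1_le fV G hlim hfin] with n hn
  exact sum_stoneG_existsAtLeast_conjList (fV n) (G n) ξ l hn

theorem tendsto_sum_eval_stoneGR
    (hmeas : ∀ (p : ℕ) (φ : Language.graph.Formula (Fin p)), MeasurableSet (solSet L φ))
    (hlim : ∀ (p : ℕ) (φ : Language.graph.Formula (Fin p)),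
      Tendsto (fun n => stoneG (fV n) (G n) φ) atTop (𝓝 (stoneL L ν φ)))
    {ξ : Language.graph.Formula (Fin 1)} (hfin : (sol1 L ξ).Finite)
    {ι : Type*} [Fintype ι] (e : ι → RootedFormula) (P : MvPolynomial ι ℝ) :
    Tendsto (fun n => ∑ s ∈ (sol1 (G n) ξ).toFinite.toFinset,
        MvPolynomial.eval (fun i => stoneGR (fV n) (G n) (e i).2 s) P) atTop
      (𝓝 (∑ s ∈ hfin.toFinset, MvPolynomial.eval (fun i => stoneLR L ν (e i).2 s) P)) := by
  have hexpand {X : Type} (S : Finset X) (x : X → ι → ℝ) :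
      ∑ s ∈ S, MvPolynomial.eval (x s) P =
        ∑ d ∈ P.support, P.coeff d * ∑ s ∈ S, ∏ i ∈ d.support, x s i ^ d i := by
    simp_rw [MvPolynomial.eval_eq, Finset.mul_sum]
    exact Finset.sum_comm
  simp only [hexpand]
  refine tendsto_finsetSum _ fun d _ => Tendsto.const_mul _ ?_
  simpa [Finsupp.prod_map_toMultiset] using
    tendsto_sum_prod_stoneGR fV G hmeas hlim hfin (d.toMultiset.toList.map e)

theorem eventually_exists_stoneGR_close
    (hmeas : ∀ (p : ℕ) (φ : Language.graph.Formula (Fin p)), MeasurableSet (solSet L φ))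
    (hlim : ∀ (p : ℕ) (φ : Language.graph.Formula (Fin p)),
      Tendsto (fun n => stoneG (fV n) (G n) φ) atTop (𝓝 (stoneL L ν φ)))
    {ξ : Language.graph.Formula (Fin 1)} (hfin : (sol1 L ξ).Finite) {r : W} (hr : r ∈ sol1 L ξ)
    {ι : Type*} [Fintype ι] (e : ι → RootedFormula) {ε : ℝ} (hε : 0 < ε) (hε1 : ε ≤ 1) :
    ∀ᶠ n in atTop, ∃ s : V n, ∀ i,
      |stoneGR (fV n) (G n) (e i).2 s - stoneLR L ν (e i).2 r| < ε := by
  set c := fun i => stoneLR L ν (e i).2 r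
  have hc i : c i ∈ Set.Icc 0 1 := stoneLR_mem_Icc ν _ r
  set k := (sol1 L ξ).ncard
  obtain ⟨M, hM⟩ : ∃ M : ℕ, k * (1 - ε ^ 2) ^ M < 1 := by
    have := (tendsto_pow_atTop_nhds_zero_of_lt_one (r := 1 - ε ^ 2) (by nlinarith)
      (by nlinarith)).const_mul (k : ℝ)
    exact (this.eventually (gt_mem_nhds (by simp))).exists
  have hlimit : 1 ≤ ∑ s ∈ hfin.toFinset,
      MvPolynomial.eval (fun i => stoneLR L ν (e i).2 s) (bumpPoly c ^ M) := by
    refine le_of_eq_of_le ?_ (Finset.single_le_sum (fun s _ => ?_) (hfin.mem_toFinset.2 hr))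
    · simp [eval_bumpPoly, c]
    · simpa [eval_bumpPoly] using pow_nonneg (prod_one_sub_sq_sub_nonneg
        (fun i => stoneLR_mem_Icc ν _ s) hc) M
  filter_upwards [(tendsto_sum_eval_stoneGR fV G hmeas hlim hfin e (bumpPoly c ^ M)).eventually
    (lt_mem_nhds (hM.trans_le hlimit)), eventually_ncard_sol1_le fV G hlim hfin] with n hn hk
  by_contra! hfar
  refine hn.not_ge ?_
  have hx s i := stoneGR_mem_Icc (fV n) (G n) (e i).2 s
  calc ∑ s ∈ (sol1 (G n) ξ).toFinite.toFinset,
        MvPolynomial.eval (fun i => stoneGR (fV n) (G n) (e i).2 s) (bumpPoly c ^ M)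
      ≤ ∑ s ∈ (sol1 (G n) ξ).toFinite.toFinset, (1 - ε ^ 2) ^ M :=
        Finset.sum_le_sum fun s _ => by
          obtain ⟨j, hj⟩ := hfar s
          simpa [eval_bumpPoly] using pow_le_pow_left₀ (prod_one_sub_sq_sub_nonneg (hx s) hc)
            (prod_one_sub_sq_sub_le (hx s) hc hε.le hj) M
    _ ≤ k * (1 - ε ^ 2) ^ M := by
        rw [Finset.sum_const, nsmul_eq_mul, ← Set.ncard_eq_toFinset_card]
        exact mul_le_mul_of_nonneg_right (by exact_mod_cast hk) (pow_nonneg (by nlinarith) M)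

end Convergence

section Selection

theorem exists_tendsto_of_eventually_exists {X : ℕ → Type*} [∀ n, Nonempty (X n)] {Y : Type*}
    {l : Filter Y} [l.IsCountablyGenerated] (f : ∀ n, X n → Y)
    (h : ∀ U ∈ l, ∀ᶠ n in atTop, ∃ x, f n x ∈ U) :
    ∃ x : ∀ n, X n, Tendsto (fun n => f n (x n)) atTop l := by
  classical
  obtain ⟨U, hU⟩ := l.exists_antitone_basis
  choose N hN using fun m => eventually_atTop.1 (h (U m) (hU.mem m))
  set m := fun n => Nat.findGreatest (fun m => ∃ x, f n x ∈ U m) n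
  refine ⟨fun n => if hn : ∃ x, f n x ∈ U (m n) then hn.choose else Classical.arbitrary _,
    hU.1.tendsto_right_iff.2 fun j _ => ?_⟩
  filter_upwards [eventually_ge_atTop j, eventually_ge_atTop (N j)] with n hjn hNn
  have hn : ∃ x, f n x ∈ U (m n) :=
    Nat.findGreatest_spec (P := fun m => ∃ x, f n x ∈ U m) hjn (hN j n hNn)
  rw [dif_pos hn]
  exact hU.antitone (Nat.le_findGreatest hjn (hN j n hNn)) hn.choose_spec

theorem eventually_exists_mem_of_mem_nhds_pi {ι : Type*} {X : ℕ → Type*}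
    (F : ∀ n, X n → ι → ℝ) {c : ι → ℝ} (h : ∀ (I : Finset ι) (ε : ℝ), 0 < ε → ε ≤ 1 →
      ∀ᶠ n in atTop, ∃ x, ∀ i ∈ I, |F n x i - c i| < ε) :
    ∀ U ∈ 𝓝 c, ∀ᶠ n in atTop, ∃ x, F n x ∈ U := by
  intro U hU
  obtain ⟨I, t, ht, hIt⟩ := Filter.mem_pi'.1 (nhds_pi (a := c) ▸ hU)
  have hball : ∀ᶠ ε in 𝓝[>] (0 : ℝ), ∀ i ∈ I, Metric.ball (c i) ε ⊆ t i :=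
    (eventually_all_finset I).2 fun i _ => by
      obtain ⟨δ, hδ, hδt⟩ := Metric.mem_nhds_iff.1 (ht i)
      filter_upwards [Ioo_mem_nhdsGT hδ] with ε hε using (Metric.ball_subset_ball hε.2.le).trans hδt
  obtain ⟨ε, hεt, hε⟩ := (hball.and (Ioc_mem_nhdsGT one_pos)).exists
  filter_upwards [h I ε hε.1 hε.2] with n ⟨x, hx⟩
  exact ⟨x, hIt fun i hi => hεt i hi (by simpa [Real.dist_eq] using hx i hi)⟩

end Selection

theorem rooting_algebraic_vertices_general
    (V : ℕ → Type) (fV : ∀ n, Fintype (V n)) (hVne : ∀ n, Nonempty (V n))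
    (G : ∀ n, SimpleGraph (V n))
    (W : Type) [MeasurableSpace W]
    (L : SimpleGraph W) (ν : Measure W) [IsProbabilityMeasure ν]
    (hmeas : ∀ (p : ℕ) (φ : Language.graph.Formula (Fin p)), MeasurableSet (solSet L φ))
    (hlim : ∀ (p : ℕ) (φ : Language.graph.Formula (Fin p)),
      Tendsto (fun n => stoneG (fV n) (G n) φ) atTop (nhds (stoneL L ν φ)))
    (r : W)
    (halg : ∃ ξ : Language.graph.Formula (Fin 1), (sol1 L ξ).Finite ∧ r ∈ sol1 L ξ) :
    ∃ rs : (n : ℕ) → V n,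
      ∀ (p : ℕ) (φ : Language.graph.Formula (Fin (p + 1))),
        Tendsto (fun n => stoneGR (fV n) (G n) φ (rs n)) atTop
          (nhds (stoneLR L ν φ r)) := by
  obtain ⟨ξ, hfin, hr⟩ := halg
  have hclose : ∀ U ∈ 𝓝 fun φ : RootedFormula => stoneLR L ν φ.2 r,
      ∀ᶠ n in atTop, ∃ s, (fun φ : RootedFormula => stoneGR (fV n) (G n) φ.2 s) ∈ U :=
    eventually_exists_mem_of_mem_nhds_pi _ fun I ε hε hε1 => by
      simpa using eventually_exists_stoneGR_close fV G hmeas hlim hfin hr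
        (fun φ : I => φ.1) hε hε1
  obtain ⟨rs, hrs⟩ := exists_tendsto_of_eventually_exists _ hclose
  exact ⟨rs, fun p φ => tendsto_pi_nhds.1 hrs ⟨p, φ⟩⟩

/-- If `(Gₙ)` is an FO-convergent sequence of finite graphs with modeling
limit `L` and `r` is an algebraic vertex of `L`, then there are roots `rₙ ∈ V(Gₙ)` such that
`(Gₙ, rₙ)` FO-converges to `(L, r)`. -/
theorem rooting_algebraic_vertices
    (V : ℕ → Type) (fV : ∀ n, Fintype (V n)) (hVne : ∀ n, Nonempty (V n))
    (G : ∀ n, SimpleGraph (V n))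
    (W : Type) [MeasurableSpace W] [StandardBorelSpace W]
    (L : SimpleGraph W) (ν : Measure W) [IsProbabilityMeasure ν]
    (hmeas : ∀ (p : ℕ) (φ : Language.graph.Formula (Fin p)), MeasurableSet (solSet L φ))
    (hFOconv : ∀ (p : ℕ) (φ : Language.graph.Formula (Fin p)),
      ∃ c : ℝ, Tendsto (fun n => stoneG (fV n) (G n) φ) atTop (nhds c))
    (hlim : ∀ (p : ℕ) (φ : Language.graph.Formula (Fin p)),
      Tendsto (fun n => stoneG (fV n) (G n) φ) atTop (nhds (stoneL L ν φ)))
    (r : W)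
    (halg : ∃ ξ : Language.graph.Formula (Fin 1), (sol1 L ξ).Finite ∧ r ∈ sol1 L ξ) :
    ∃ rs : (n : ℕ) → V n,
      ∀ (p : ℕ) (φ : Language.graph.Formula (Fin (p + 1))),
        Tendsto (fun n => stoneGR (fV n) (G n) φ (rs n)) atTop
          (nhds (stoneLR L ν φ r)) :=
  rooting_algebraic_vertices_general V fV hVne G W L ν hmeas hlim r halg
end

section
/- Under the standing assumptions, for every first-order formula φ(x_1,…,x_p,y) (p ≥ 0) there exist a sequence (r_n) with r_n ∈ ξ(G_n) and a vertex r ∈ ξ(L) such that lim_n ⟨φ,(G_n,r_n)⟩ = ⟨φ,(L,r)⟩. -/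
open FirstOrder Language MeasureTheory Filter

open scoped Classical ENNReal

def blk {V : Type} (m p : ℕ) (x : Fin (m * p) → V) (i : Fin m) : Fin p → V :=
  fun t => x (finProdFinEquiv (i, t))

def blkSet {V : Type} (m p : ℕ) (S : Set (Fin p → V)) : Set (Fin (m * p) → V) :=
  {x | ∀ i, blk m p x i ∈ S}

def rootMap (m p j : ℕ) (i : Fin m) (l : Fin j) :
    Fin (p + 1) → (Fin (m * p) ⊕ Fin j) :=
  Fin.lastCases (Sum.inr l) (fun t => Sum.inl (finProdFinEquiv (i, t)))

noncomputable def bfIInf {L : Language} {α : Type} {n : ℕ} {β : Type} (s : Finset β)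
    (f : β → L.BoundedFormula α n) : L.BoundedFormula α n :=
  BoundedFormula.iInf (fun q : s => f q)

lemma realize_bfIInf {L : Language} {M : Type} [L.Structure M] {α : Type} {n : ℕ} {β : Type}
    (s : Finset β) (f : β → L.BoundedFormula α n) (v : α → M) (xs : Fin n → M) :
    (bfIInf s f).Realize v xs ↔ ∀ b ∈ s, (f b).Realize v xs := by
  simp [bfIInf, BoundedFormula.realize_iInf]

noncomputable def beta {p : ℕ} (φ : Language.graph.Formula (Fin (p + 1)))
    (ξ : Language.graph.Formula (Fin 1)) (m j : ℕ) :
    Language.graph.Formula (Fin (m * p)) :=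
  Formula.iExs (Fin j) <|
    (bfIInf (Finset.univ.filter fun q : Fin j × Fin j => q.1 ≠ q.2)
      (fun q => (Term.equal (Term.var (Sum.inr q.1)) (Term.var (Sum.inr q.2))).not)) ⊓
    ((bfIInf Finset.univ (fun l : Fin j => ξ.relabel fun _ => Sum.inr l)) ⊓
    (bfIInf Finset.univ
      (fun q : Fin m × Fin j => φ.relabel (rootMap m p j q.1 q.2))))

lemma snoc_comp_rootMap {V : Type} {m p j : ℕ} (x : Fin (m * p) → V) (y : Fin j → V)
    (i : Fin m) (l : Fin j) :
    (Sum.elim x y) ∘ (rootMap m p j i l) = Fin.snoc (blk m p x i) (y l) := by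
  funext t
  refine Fin.lastCases ?_ (fun t' => ?_) t
  · simp [rootMap, Fin.snoc_last]
  · simp [rootMap, Fin.snoc_castSucc, blk]

lemma mem_solSet_beta {V : Type} (G : SimpleGraph V) {p : ℕ}
    (φ : Language.graph.Formula (Fin (p + 1))) (ξ : Language.graph.Formula (Fin 1))
    (m j : ℕ) (x : Fin (m * p) → V) :
    x ∈ solSet G (beta φ ξ m j) ↔
      ∃ y : Fin j → V, Function.Injective y ∧ (∀ l, y l ∈ sol1 G ξ) ∧
        ∀ i l, blk m p x i ∈ solSetR G φ (y l) := by
  letI := G.structure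
  unfold solSet beta
  simp only [Set.mem_setOf_eq, BoundedFormula.realize_iExs, Formula.realize_iExs, id_eq, BoundedFormula.realize_inf,
    Formula.Realize, realize_bfIInf, Finset.mem_filter, Finset.mem_univ, true_and,
    BoundedFormula.realize_not, Formula.realize_equal, Formula.realize_relabel,
    Term.realize_var, Sum.elim_inr, Prod.forall]
  constructor
  · rintro ⟨y, hdis, hroot, hbody⟩
    refine ⟨y, ?_, ?_, ?_⟩
    · intro a b hab
      by_contra hne
      refine hdis a b hne ?_
      show Formula.Realize ((Term.var (Sum.inr a)).equal (Term.var (Sum.inr b)))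
        (Sum.elim x y)
      rw [Formula.realize_equal]
      simpa using hab
    · intro l
      have h1 : ξ.Realize ((Sum.elim x y) ∘ (fun _ : Fin 1 => Sum.inr l)) :=
        Formula.realize_relabel.mp (hroot l trivial)
      simpa [sol1, Function.comp_def] using h1
    · intro i l
      have h2 : φ.Realize ((Sum.elim x y) ∘ rootMap m p j i l) :=
        Formula.realize_relabel.mp (hbody i l trivial)
      rwa [snoc_comp_rootMap] at h2
  · rintro ⟨y, hinj, hroot, hbody⟩
    refine ⟨y, fun a b hne hre => hne (hinj ?_), fun l _ => ?_, fun i l _ => ?_⟩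
    · have := Formula.realize_equal.mp (show Formula.Realize
        ((Term.var (Sum.inr a)).equal (Term.var (Sum.inr b))) (Sum.elim x y) from hre)
      simpa using this
    · show Formula.Realize (Formula.relabel (fun _ : Fin 1 => Sum.inr l) ξ) (Sum.elim x y)
      rw [Formula.realize_relabel]
      exact hroot l
    · show Formula.Realize (Formula.relabel (rootMap m p j i l) φ) (Sum.elim x y)
      rw [Formula.realize_relabel, snoc_comp_rootMap]
      exact hbody i l

noncomputable def blkSetEquiv {V : Type} (m p : ℕ) (S : Set (Fin p → V)) :
    blkSet m p S ≃ (Fin m → S) where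
  toFun x := fun i => ⟨blk m p x.1 i, x.2 i⟩
  invFun f := ⟨fun n => (f (finProdFinEquiv.symm n).1).1 (finProdFinEquiv.symm n).2, by
    intro i
    have : blk m p (fun n => (f (finProdFinEquiv.symm n).1).1 (finProdFinEquiv.symm n).2) i
        = (f i).1 := by
      funext t
      simp [blk]
    rw [this]
    exact (f i).2⟩
  left_inv x := by
    apply Subtype.ext
    funext n
    simp only [blk]
    rw [show ((finProdFinEquiv.symm n).1, (finProdFinEquiv.symm n).2)
      = finProdFinEquiv.symm n from rfl, Equiv.apply_symm_apply]
  right_inv f := by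
    funext i
    apply Subtype.ext
    funext t
    simp [blk]

lemma card_blkSet {V : Type} [Fintype V] (m p : ℕ) (S : Set (Fin p → V)) :
    Nat.card (blkSet m p S) = Nat.card S ^ m := by
  rw [Nat.card_congr (blkSetEquiv m p S), Nat.card_fun]
  simp

lemma measurable_blk {W : Type} [MeasurableSpace W] (m p : ℕ) (i : Fin m) :
    Measurable (fun x : Fin (m * p) → W => blk m p x i) :=
  measurable_pi_lambda _ (fun _ => measurable_pi_apply _)

lemma measurable_blkSet {W : Type} [MeasurableSpace W] {m p : ℕ} {S : Set (Fin p → W)}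
    (hS : MeasurableSet S) : MeasurableSet (blkSet m p S) := by
  have : blkSet m p S = ⋂ i, (fun x : Fin (m * p) → W => blk m p x i) ⁻¹' S := by
    ext x; simp [blkSet]
  rw [this]
  exact MeasurableSet.iInter fun i => (measurable_blk m p i) hS

/-- transport of pi measures along a relabeling of a finite index set. -/
lemma measure_pi_comap {W : Type} [MeasurableSpace W] (ν : Measure W) [SigmaFinite ν]
    {ι κ : Type} [Fintype ι] [Fintype κ] (e : ι ≃ κ) {S : Set (κ → W)}
    (hS : MeasurableSet S) :
    Measure.pi (fun _ : ι => ν) ((fun (x : ι → W) (k : κ) => x (e.symm k)) ⁻¹' S)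
      = Measure.pi (fun _ : κ => ν) S := by
  have h := measurePreserving_piCongrLeft (fun _ : κ => ν) e
  have hfe : ⇑(MeasurableEquiv.piCongrLeft (fun _ : κ => W) e)
      = fun (x : ι → W) (k : κ) => x (e.symm k) := by
    funext x
    funext k
    rw [MeasurableEquiv.coe_piCongrLeft]
    conv_lhs => rw [← e.apply_symm_apply k, Equiv.piCongrLeft_apply_apply]
  rw [← hfe]
  exact h.measure_preimage hS.nullMeasurableSet

def sumBlockEquiv (m p : ℕ) : (Fin p ⊕ (Fin m × Fin p)) ≃ (Fin (m + 1) × Fin p) where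
  toFun := Sum.elim (fun t => (Fin.last m, t)) (fun q => (q.1.castSucc, q.2))
  invFun := fun q => if h : (q.1 : ℕ) < m then Sum.inr (⟨q.1, h⟩, q.2) else Sum.inl q.2
  left_inv := by
    rintro (t | ⟨i, t⟩)
    · simp
    · simp [i.isLt]
  right_inv := by
    rintro ⟨i, t⟩
    dsimp only
    by_cases h : (i : ℕ) < m
    · rw [dif_pos h]
      simp [Fin.ext_iff]
    · rw [dif_neg h]
      have hi : i = Fin.last m := by
        have := i.isLt
        apply Fin.ext
        simp only [Fin.val_last]
        omega
      rw [hi]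
      rfl

lemma measure_prodBlk {W : Type} [MeasurableSpace W] (ν : Measure W) [IsProbabilityMeasure ν]
    {p : ℕ} {S : Set (Fin p → W)} (hS : MeasurableSet S) (m : ℕ) :
    Measure.pi (fun _ : Fin m × Fin p => ν) {y | ∀ i : Fin m, (fun t => y (i, t)) ∈ S}
      = (Measure.pi (fun _ : Fin p => ν) S) ^ m := by
  induction m with
  | zero =>
      have : {y : Fin 0 × Fin p → W | ∀ i : Fin 0, (fun t => y (i, t)) ∈ S} = Set.univ := by
        ext y
        simp only [Set.mem_setOf_eq, Set.mem_univ, iff_true]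
        exact fun i => i.elim0
      rw [this, pow_zero, measure_univ]
  | succ m ih =>
      have hT : MeasurableSet {y : Fin m × Fin p → W | ∀ i : Fin m, (fun t => y (i, t)) ∈ S} := by
        have : {y : Fin m × Fin p → W | ∀ i : Fin m, (fun t => y (i, t)) ∈ S}
            = ⋂ i : Fin m, (fun (y : Fin m × Fin p → W) (t : Fin p) => y (i, t)) ⁻¹' S := by
          ext y; simp
        rw [this]
        exact MeasurableSet.iInter fun i =>
          (measurable_pi_lambda _ fun t => measurable_pi_apply _) hS
      have hT1 : MeasurableSet {y : Fin (m+1) × Fin p → W | ∀ i : Fin (m+1), (fun t => y (i, t)) ∈ S} := by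
        have : {y : Fin (m+1) × Fin p → W | ∀ i : Fin (m+1), (fun t => y (i, t)) ∈ S}
            = ⋂ i : Fin (m+1), (fun (y : Fin (m+1) × Fin p → W) (t : Fin p) => y (i, t)) ⁻¹' S := by
          ext y; simp
        rw [this]
        exact MeasurableSet.iInter fun i =>
          (measurable_pi_lambda _ fun t => measurable_pi_apply _) hS
      rw [← measure_pi_comap ν (sumBlockEquiv m p) hT1]
      have hseteq : ((fun (x : (Fin p ⊕ (Fin m × Fin p)) → W) (k : Fin (m+1) × Fin p) =>
            x ((sumBlockEquiv m p).symm k)) ⁻¹'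
            {y : Fin (m+1) × Fin p → W | ∀ i : Fin (m+1), (fun t => y (i, t)) ∈ S})
          = (MeasurableEquiv.sumPiEquivProdPi (fun _ : Fin p ⊕ (Fin m × Fin p) => W)) ⁻¹'
            (S ×ˢ {y : Fin m × Fin p → W | ∀ i : Fin m, (fun t => y (i, t)) ∈ S}) := by
        have e1 : ∀ t : Fin p, (sumBlockEquiv m p).symm (Fin.last m, t) = Sum.inl t := by
          intro t
          rw [Equiv.symm_apply_eq]
          rfl
        have e2 : ∀ (i : Fin m) (t : Fin p),
            (sumBlockEquiv m p).symm (i.castSucc, t) = Sum.inr (i, t) := by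
          intro i t
          rw [Equiv.symm_apply_eq]
          rfl
        ext z
        simp only [Set.mem_preimage, Set.mem_setOf_eq, Set.mem_prod,
          MeasurableEquiv.coe_sumPiEquivProdPi, Equiv.sumPiEquivProdPi_apply]
        constructor
        · intro h
          refine ⟨?_, fun i => ?_⟩
          · have := h (Fin.last m)
            simpa only [e1] using this
          · have := h i.castSucc
            simpa only [e2] using this
        · rintro ⟨h1, h2⟩ i
          refine Fin.lastCases ?_ (fun i' => ?_) i
          · simp only [e1]
            exact h1
          · simp only [e2]
            exact h2 i'
      rw [hseteq]
      have hmp := measurePreserving_sumPiEquivProdPi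
        (X := fun _ : Fin p ⊕ (Fin m × Fin p) => W) (μ := fun _ => ν)
      rw [hmp.measure_preimage ((hS.prod hT).nullMeasurableSet)]
      rw [Measure.prod_prod, ih, pow_succ, mul_comm]

lemma measure_blkSet' {W : Type} [MeasurableSpace W] (ν : Measure W) [IsProbabilityMeasure ν]
    {p : ℕ} {S : Set (Fin p → W)} (hS : MeasurableSet S) (m : ℕ) :
    Measure.pi (fun _ : Fin (m * p) => ν) (blkSet m p S)
      = (Measure.pi (fun _ : Fin p => ν) S) ^ m := by
  have hT : MeasurableSet {y : Fin m × Fin p → W | ∀ i : Fin m, (fun t => y (i, t)) ∈ S} := by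
    have : {y : Fin m × Fin p → W | ∀ i : Fin m, (fun t => y (i, t)) ∈ S}
        = ⋂ i : Fin m, (fun (y : Fin m × Fin p → W) (t : Fin p) => y (i, t)) ⁻¹' S := by
      ext y; simp
    rw [this]
    exact MeasurableSet.iInter fun i =>
      (measurable_pi_lambda _ fun t => measurable_pi_apply _) hS
  have := measure_pi_comap (ι := Fin (m * p)) ν finProdFinEquiv.symm hT
  rw [← measure_prodBlk ν hS m, ← this]
  congr 1

lemma measurable_solSetR {W : Type} [MeasurableSpace W] (L : SimpleGraph W) {p : ℕ}
    (φ : Language.graph.Formula (Fin (p + 1))) (hm : MeasurableSet (solSet L φ)) (r : W) :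
    MeasurableSet (solSetR L φ r) := by
  have hsnoc : Measurable (fun v : Fin p → W => Fin.snoc v r : (Fin p → W) → (Fin (p+1) → W)) := by
    apply measurable_pi_lambda
    intro t
    refine Fin.lastCases ?_ (fun t' => ?_) t
    · simp only [Fin.snoc_last]
      exact measurable_const
    · simp only [Fin.snoc_castSucc]
      exact measurable_pi_apply _
  exact hsnoc hm

lemma layer_card (k c : ℕ) (h : c ≤ k) :
    ((Finset.Icc 1 k).filter fun j => j ≤ c).card = c := by
  have : (Finset.Icc 1 k).filter (fun j => j ≤ c) = Finset.Icc 1 c := by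
    ext j
    simp only [Finset.mem_filter, Finset.mem_Icc]
    omega
  rw [this, Nat.card_Icc]
  omega

lemma mem_beta_iff_le_cnt {V : Type} (G : SimpleGraph V) {p : ℕ}
    (φ : Language.graph.Formula (Fin (p + 1))) (ξ : Language.graph.Formula (Fin 1))
    (hfin : (sol1 G ξ).Finite) (m j : ℕ) (x : Fin (m * p) → V) :
    x ∈ solSet G (beta φ ξ m j) ↔
      j ≤ (hfin.toFinset.filter fun r => x ∈ blkSet m p (solSetR G φ r)).card := by
  classical
  rw [mem_solSet_beta]
  constructor
  · rintro ⟨y, hinj, hroot, hbody⟩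
    have himg : (Finset.univ.image y : Finset V)
        ⊆ hfin.toFinset.filter fun r => x ∈ blkSet m p (solSetR G φ r) := by
      intro r hr
      obtain ⟨l, -, rfl⟩ := Finset.mem_image.mp hr
      refine Finset.mem_filter.mpr ⟨hfin.mem_toFinset.mpr (hroot l), fun i => hbody i l⟩
    calc j = (Finset.univ : Finset (Fin j)).card := by simp
      _ = (Finset.univ.image y).card := (Finset.card_image_of_injective _ hinj).symm
      _ ≤ _ := Finset.card_le_card himg
  · intro hj
    obtain ⟨t, hts, htc⟩ := Finset.exists_subset_card_eq hj
    let e : Fin j → t := fun l => t.equivFin.symm (Fin.cast htc.symm l)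
    refine ⟨fun l => (e l : V), ?_, ?_, ?_⟩
    · intro a b hab
      have h2 := t.equivFin.symm.injective (Subtype.ext hab)
      exact Fin.ext (by simpa using congrArg Fin.val h2)
    · intro l
      have := hts (e l).2
      exact (hfin.mem_toFinset.mp (Finset.mem_filter.mp this).1)
    · intro i l
      have := hts (e l).2
      exact (Finset.mem_filter.mp this).2 i

lemma natcard_eq_card_filter {α : Type} [Fintype α] (s : Set α) :
    Nat.card s = (Finset.univ.filter fun x => x ∈ s).card := by
  rw [Nat.card_eq_card_finite_toFinset (Set.toFinite s)]
  congr 1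
  ext x
  simp

lemma sum_card_beta {V : Type} [Fintype V] (G : SimpleGraph V) {p : ℕ}
    (φ : Language.graph.Formula (Fin (p + 1))) (ξ : Language.graph.Formula (Fin 1)) (m : ℕ) :
    ∑ j ∈ Finset.Icc 1 (Nat.card (sol1 G ξ)), Nat.card (solSet G (beta φ ξ m j))
      = ∑ r ∈ (Set.toFinite (sol1 G ξ)).toFinset, Nat.card (solSetR G φ r) ^ m := by
  set F := (Set.toFinite (sol1 G ξ)).toFinset with hF
  set k := Nat.card (sol1 G ξ) with hk
  have hFk : F.card = k := (Nat.card_eq_card_finite_toFinset _).symm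
  set cnt : (Fin (m * p) → V) → ℕ :=
    fun x => (F.filter fun r => x ∈ blkSet m p (solSetR G φ r)).card with hcnt
  have hcnt_le : ∀ x, cnt x ≤ k := fun x => le_trans (Finset.card_filter_le _ _) hFk.le
  have h1 : ∀ j, Nat.card (solSet G (beta φ ξ m j))
      = (Finset.univ.filter fun x : Fin (m * p) → V => j ≤ cnt x).card := by
    intro j
    rw [natcard_eq_card_filter]
    congr 1
    ext x
    simp only [Finset.mem_filter, Finset.mem_univ, true_and]
    exact mem_beta_iff_le_cnt G φ ξ (Set.toFinite _) m j x
  calc ∑ j ∈ Finset.Icc 1 k, Nat.card (solSet G (beta φ ξ m j))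
      = ∑ j ∈ Finset.Icc 1 k, ∑ x : Fin (m * p) → V, if j ≤ cnt x then 1 else 0 := by
        simp only [h1, Finset.card_filter]
    _ = ∑ x : Fin (m * p) → V, ∑ j ∈ Finset.Icc 1 k, if j ≤ cnt x then 1 else 0 :=
        Finset.sum_comm
    _ = ∑ x : Fin (m * p) → V, cnt x := by
        refine Finset.sum_congr rfl fun x _ => ?_
        rw [← Finset.card_filter]
        exact layer_card k (cnt x) (hcnt_le x)
    _ = ∑ x : Fin (m * p) → V, ∑ r ∈ F, if x ∈ blkSet m p (solSetR G φ r) then 1 else 0 := by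
        refine Finset.sum_congr rfl fun x _ => ?_
        show (F.filter fun r => x ∈ blkSet m p (solSetR G φ r)).card = _
        rw [Finset.card_filter]
    _ = ∑ r ∈ F, ∑ x : Fin (m * p) → V, if x ∈ blkSet m p (solSetR G φ r) then 1 else 0 :=
        Finset.sum_comm
    _ = ∑ r ∈ F, Nat.card (solSetR G φ r) ^ m := by
        refine Finset.sum_congr rfl fun r _ => ?_
        rw [← Finset.card_filter, ← natcard_eq_card_filter, card_blkSet]

lemma sum_measure_beta {W : Type} [MeasurableSpace W] (L : SimpleGraph W) (ν : Measure W)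
    [IsProbabilityMeasure ν] {p : ℕ} (φ : Language.graph.Formula (Fin (p + 1)))
    (ξ : Language.graph.Formula (Fin 1))
    (hmeas : ∀ (q : ℕ) (ψ : Language.graph.Formula (Fin q)), MeasurableSet (solSet L ψ))
    (hfin : (sol1 L ξ).Finite) (m : ℕ) :
    ∑ j ∈ Finset.Icc 1 (Nat.card (sol1 L ξ)),
        (Measure.pi fun _ : Fin (m * p) => ν) (solSet L (beta φ ξ m j))
      = ∑ r ∈ hfin.toFinset, ((Measure.pi fun _ : Fin p => ν) (solSetR L φ r)) ^ m := by
  set F := hfin.toFinset with hF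
  set k := Nat.card (sol1 L ξ) with hk
  have hFk : F.card = k := (Nat.card_eq_card_finite_toFinset _).symm
  have hCr : ∀ r, MeasurableSet (solSetR L φ r) := fun r =>
    measurable_solSetR L φ (hmeas _ φ) r
  have hDr : ∀ r : W, MeasurableSet (blkSet m p (solSetR L φ r)) := fun r =>
    measurable_blkSet (hCr r)
  set cnt : (Fin (m * p) → W) → ℕ :=
    fun x => (F.filter fun r => x ∈ blkSet m p (solSetR L φ r)).card with hcnt
  have hcnt_le : ∀ x, cnt x ≤ k := fun x => le_trans (Finset.card_filter_le _ _) hFk.le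
  have hBj : ∀ j, solSet L (beta φ ξ m j) = {x | j ≤ cnt x} := by
    intro j
    ext x
    exact mem_beta_iff_le_cnt L φ ξ hfin m j x
  calc ∑ j ∈ Finset.Icc 1 k, (Measure.pi fun _ : Fin (m * p) => ν) (solSet L (beta φ ξ m j))
      = ∑ j ∈ Finset.Icc 1 k, ∫⁻ x, ({x | j ≤ cnt x} : Set _).indicator 1 x
          ∂(Measure.pi fun _ : Fin (m * p) => ν) := by
        refine Finset.sum_congr rfl fun j _ => ?_
        have hBm : MeasurableSet {x : Fin (m * p) → W | j ≤ cnt x} := by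
          rw [← hBj j]
          exact hmeas _ _
        rw [lintegral_indicator_one hBm, ← hBj j]
    _ = ∫⁻ x, ∑ j ∈ Finset.Icc 1 k, ({x | j ≤ cnt x} : Set _).indicator 1 x
          ∂(Measure.pi fun _ : Fin (m * p) => ν) := by
        rw [lintegral_finset_sum]
        intro j _
        refine (measurable_one.indicator ?_)
        rw [← hBj j]
        exact hmeas _ _
    _ = ∫⁻ x, (cnt x : ℝ≥0∞) ∂(Measure.pi fun _ : Fin (m * p) => ν) := by
        congr 1
        funext x
        have : ∀ j, ({x | j ≤ cnt x} : Set _).indicator (1 : (Fin (m*p) → W) → ℝ≥0∞) x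
            = if j ≤ cnt x then 1 else 0 := by
          intro j
          simp [Set.indicator_apply]
        simp only [this]
        rw [Finset.sum_boole, layer_card k (cnt x) (hcnt_le x)]
    _ = ∫⁻ x, ∑ r ∈ F, (blkSet m p (solSetR L φ r)).indicator 1 x
          ∂(Measure.pi fun _ : Fin (m * p) => ν) := by
        congr 1
        funext x
        show ((F.filter fun r => x ∈ blkSet m p (solSetR L φ r)).card : ℝ≥0∞) = _
        rw [← Finset.sum_boole]
        refine Finset.sum_congr rfl fun r _ => ?_
        simp [Set.indicator_apply]
    _ = ∑ r ∈ F, (Measure.pi fun _ : Fin (m * p) => ν) (blkSet m p (solSetR L φ r)) := by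
        rw [lintegral_finset_sum]
        · refine Finset.sum_congr rfl fun r _ => ?_
          rw [lintegral_indicator_one (hDr r)]
        · exact fun r _ => measurable_one.indicator (hDr r)
    _ = ∑ r ∈ F, ((Measure.pi fun _ : Fin p => ν) (solSetR L φ r)) ^ m := by
        refine Finset.sum_congr rfl fun r _ => ?_
        exact measure_blkSet' ν (hCr r) m

lemma exists_pow_mul_lt (k : ℕ) {b a : ℝ} (hb : 0 ≤ b) (hab : b < a) :
    ∃ m : ℕ, (k : ℝ) * b ^ m < a ^ m := by
  rcases eq_or_lt_of_le hb with hb0 | hb0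
  · refine ⟨1, ?_⟩
    rw [← hb0]
    simpa using lt_of_le_of_lt hb hab
  · have h1 : (1 : ℝ) < a / b := (one_lt_div hb0).mpr hab
    obtain ⟨m, hm⟩ := ((tendsto_pow_atTop_atTop_of_one_lt h1).eventually_gt_atTop (k : ℝ)).exists
    refine ⟨m, ?_⟩
    have hbm : (0 : ℝ) < b ^ m := pow_pos hb0 m
    calc (k : ℝ) * b ^ m < (a / b) ^ m * b ^ m := by
          exact mul_lt_mul_of_pos_right hm hbm
      _ = a ^ m := by
          rw [div_pow, div_mul_cancel₀]
          exact ne_of_gt hbm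


/-- Lemma: rooting for a single formula. Under the standing assumptions,
for every rooted formula `φ(x₁,…,x_p,y)` there are roots `rₙ ∈ ξ(Gₙ)` and `r ∈ ξ(L)`
with `⟨φ,(Gₙ,rₙ)⟩ → ⟨φ,(L,r)⟩`. -/
theorem rooting_for_single_formula

    (V : ℕ → Type) (fV : ∀ n, Fintype (V n)) (hVne : ∀ n, Nonempty (V n))
    (G : ∀ n, SimpleGraph (V n))
    (W : Type) [MeasurableSpace W] [StandardBorelSpace W]
    (L : SimpleGraph W) (ν : Measure W) [IsProbabilityMeasure ν]
    (hmeas : ∀ (p : ℕ) (φ : Language.graph.Formula (Fin p)), MeasurableSet (solSet L φ))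
    (hFOconv : ∀ (p : ℕ) (φ : Language.graph.Formula (Fin p)),
      ∃ c : ℝ, Tendsto (fun n => stoneG (fV n) (G n) φ) atTop (nhds c))
    (hlim : ∀ (p : ℕ) (φ : Language.graph.Formula (Fin p)),
      Tendsto (fun n => stoneG (fV n) (G n) φ) atTop (nhds (stoneL L ν φ)))
    (ξ : Language.graph.Formula (Fin 1))
    (hfin : (sol1 L ξ).Finite) (hnonempty : (sol1 L ξ).Nonempty)
    (hmin : ∀ ψ : Language.graph.Formula (Fin 1),
      sol1 L ψ ⊆ sol1 L ξ → sol1 L ψ = ∅ ∨ sol1 L ψ = sol1 L ξ)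
    (hcard : ∀ n, Nat.card (sol1 (G n) ξ) = Nat.card (sol1 L ξ))
    (p : ℕ) (φ : Language.graph.Formula (Fin (p + 1))) :
    ∃ (rs : (n : ℕ) → V n) (r : W), (∀ n, rs n ∈ sol1 (G n) ξ) ∧ r ∈ sol1 L ξ ∧
      Tendsto (fun n => stoneGR (fV n) (G n) φ (rs n)) atTop (nhds (stoneLR L ν φ r)) := by

  classical
  set k := Nat.card (sol1 L ξ) with hkdef
  have hL_fint : Finite (sol1 L ξ) := hfin
  have hL_ne : Nonempty (sol1 L ξ) := hnonempty.to_subtype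
  have hk1 : 1 ≤ k := Nat.one_le_iff_ne_zero.mpr (Nat.card_pos).ne'
  set FL : Finset W := hfin.toFinset with hFL
  have hFLcard : FL.card = k := (Nat.card_eq_card_finite_toFinset hfin).symm
  set Fn : ∀ n, Finset (V n) := fun n => (Set.toFinite (sol1 (G n) ξ)).toFinset with hFn
  have hFncard : ∀ n, (Fn n).card = k := by
    intro n
    rw [hFn]
    rw [← Nat.card_eq_card_finite_toFinset (Set.toFinite (sol1 (G n) ξ))]
    exact hcard n
  set tG : ∀ n, V n → ℝ := fun n r => stoneGR (fV n) (G n) φ r with htG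
  set sL : W → ℝ := fun r => stoneLR L ν φ r with hsL
  have htG0 : ∀ n r, 0 ≤ tG n r := fun n r =>
    div_nonneg (Nat.cast_nonneg _) (pow_nonneg (Nat.cast_nonneg _) _)
  have hsL0 : ∀ r, 0 ≤ sL r := fun r => ENNReal.toReal_nonneg
  -- Stone pairing identities
  have hstoneG : ∀ n m, ∑ j ∈ Finset.Icc 1 k, stoneG (fV n) (G n) (beta φ ξ m j)
      = ∑ r ∈ Fn n, (tG n r) ^ m := by
    intro n m
    have hc := sum_card_beta (G n) φ ξ m
    rw [hcard n] at hc
    have key : (∑ j ∈ Finset.Icc 1 k, (Nat.card (solSet (G n) (beta φ ξ m j)) : ℝ))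
        = ∑ r ∈ Fn n, (Nat.card (solSetR (G n) φ r) : ℝ) ^ m := by
      exact_mod_cast congrArg (Nat.cast : ℕ → ℝ) hc
    have hpow : ((Fintype.card (V n) : ℝ)) ^ (m * p)
        = (((Fintype.card (V n) : ℝ)) ^ p) ^ m := pow_mul' _ m p
    calc ∑ j ∈ Finset.Icc 1 k, stoneG (fV n) (G n) (beta φ ξ m j)
        = (∑ j ∈ Finset.Icc 1 k, (Nat.card (solSet (G n) (beta φ ξ m j)) : ℝ))
            / ((Fintype.card (V n) : ℝ)) ^ (m * p) := by
          rw [Finset.sum_div]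
          rfl
      _ = ∑ r ∈ Fn n, (Nat.card (solSetR (G n) φ r) : ℝ) ^ m
            / (((Fintype.card (V n) : ℝ)) ^ p) ^ m := by
          rw [key, hpow, Finset.sum_div]
      _ = ∑ r ∈ Fn n, (tG n r) ^ m := by
          refine Finset.sum_congr rfl fun r _ => ?_
          rw [htG]
          show _ = ((Nat.card (solSetR (G n) φ r) : ℝ) / (Fintype.card (V n) : ℝ) ^ p) ^ m
          rw [div_pow]
  have hstoneL : ∀ m, ∑ j ∈ Finset.Icc 1 k, stoneL L ν (beta φ ξ m j)
      = ∑ r ∈ FL, (sL r) ^ m := by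
    intro m
    have hc := sum_measure_beta L ν φ ξ hmeas hfin m
    calc ∑ j ∈ Finset.Icc 1 k, stoneL L ν (beta φ ξ m j)
        = (∑ j ∈ Finset.Icc 1 k,
            (Measure.pi fun _ : Fin (m * p) => ν) (solSet L (beta φ ξ m j))).toReal := by
          rw [ENNReal.toReal_sum]
          · rfl
          · exact fun j _ => measure_ne_top _ _
      _ = (∑ r ∈ FL, ((Measure.pi fun _ : Fin p => ν) (solSetR L φ r)) ^ m).toReal := by
          rw [hc]
      _ = ∑ r ∈ FL, (sL r) ^ m := by
          rw [ENNReal.toReal_sum]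
          · refine Finset.sum_congr rfl fun r _ => ?_
            rw [ENNReal.toReal_pow]
            rfl
          · intro r _
            exact ENNReal.pow_ne_top (measure_ne_top _ _)
  have hSlim : ∀ m, Tendsto (fun n => ∑ r ∈ Fn n, (tG n r) ^ m) atTop
      (nhds (∑ r ∈ FL, (sL r) ^ m)) := by
    intro m
    have : Tendsto (fun n => ∑ j ∈ Finset.Icc 1 k, stoneG (fV n) (G n) (beta φ ξ m j)) atTop
        (nhds (∑ j ∈ Finset.Icc 1 k, stoneL L ν (beta φ ξ m j))) :=
      tendsto_finset_sum _ fun j _ => hlim _ (beta φ ξ m j)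
    rw [hstoneL m] at this
    convert this using 1
    funext n
    exact (hstoneG n m).symm
  -- maximizers
  have hFnne : ∀ n, (Fn n).Nonempty := fun n => Finset.card_pos.mp (by rw [hFncard n]; omega)
  have hmaxn : ∀ n, ∃ b ∈ Fn n, ∀ b' ∈ Fn n, tG n b' ≤ tG n b := fun n =>
    (Fn n).exists_max_image (tG n) (hFnne n)
  choose rs hrs1 hrs2 using hmaxn
  obtain ⟨r, hrF, hrmax⟩ :=
    FL.exists_max_image sL (hfin.toFinset_nonempty.mpr hnonempty)
  refine ⟨rs, r, fun n => (Set.Finite.mem_toFinset _).mp (hrs1 n),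
    hfin.mem_toFinset.mp hrF, ?_⟩
  set ML := sL r with hML
  have hML0 : 0 ≤ ML := hsL0 r
  have hMn0 : ∀ n, 0 ≤ tG n (rs n) := fun n => htG0 n (rs n)
  rw [show (fun n => stoneGR (fV n) (G n) φ (rs n)) = fun n => tG n (rs n) from rfl,
    show stoneLR L ν φ r = ML from rfl]
  rw [tendsto_order]
  constructor
  · -- lower bound
    intro a' ha'
    rcases lt_or_ge a' 0 with ha0 | ha0
    · exact Eventually.of_forall fun n => lt_of_lt_of_le ha0 (hMn0 n)
    · obtain ⟨m, hm⟩ := exists_pow_mul_lt k ha0 ha'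
      have hSL_ge : ML ^ m ≤ ∑ r' ∈ FL, (sL r') ^ m := by
        refine Finset.single_le_sum (fun r' _ => pow_nonneg (hsL0 r') m) hrF
      have hlow : (k : ℝ) * a' ^ m < ∑ r' ∈ FL, (sL r') ^ m := lt_of_lt_of_le hm hSL_ge
      have hev := (hSlim m).eventually_const_lt hlow
      filter_upwards [hev] with n hn
      have hcount : ∑ r' ∈ Fn n, (tG n r') ^ m ≤ (k : ℝ) * (tG n (rs n)) ^ m := by
        have := Finset.sum_le_card_nsmul (Fn n) (fun r' => (tG n r') ^ m)
          ((tG n (rs n)) ^ m)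
          (fun r' hr' => pow_le_pow_left₀ (htG0 n r') (hrs2 n r' hr') m)
        rw [hFncard n] at this
        simpa [nsmul_eq_mul] using this
      have : (k : ℝ) * a' ^ m < (k : ℝ) * (tG n (rs n)) ^ m :=
        lt_of_lt_of_le hn hcount
      have hklt : a' ^ m < (tG n (rs n)) ^ m := by
        have hkpos : (0 : ℝ) < (k : ℝ) := by exact_mod_cast hk1
        exact lt_of_mul_lt_mul_left this (le_of_lt hkpos)
      exact lt_of_pow_lt_pow_left₀ m (hMn0 n) hklt
  · -- upper bound
    intro a' ha'
    obtain ⟨m, hm⟩ := exists_pow_mul_lt k hML0 ha'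
    have hSL_le : ∑ r' ∈ FL, (sL r') ^ m ≤ (k : ℝ) * ML ^ m := by
      have := Finset.sum_le_card_nsmul FL (fun r' => (sL r') ^ m) (ML ^ m)
        (fun r' hr' => pow_le_pow_left₀ (hsL0 r') (hrmax r' hr') m)
      rw [hFLcard] at this
      simpa [nsmul_eq_mul] using this
    have hup : ∑ r' ∈ FL, (sL r') ^ m < a' ^ m := lt_of_le_of_lt hSL_le hm
    have hev := (hSlim m).eventually_lt_const hup
    filter_upwards [hev] with n hn
    have hterm : (tG n (rs n)) ^ m ≤ ∑ r' ∈ Fn n, (tG n r') ^ m :=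
      Finset.single_le_sum (fun r' _ => pow_nonneg (htG0 n r') m) (hrs1 n)
    have : (tG n (rs n)) ^ m < a' ^ m := lt_of_le_of_lt hterm hn
    exact lt_of_pow_lt_pow_left₀ m (le_of_lt (lt_of_le_of_lt hML0 ha')) this
end

section
/- Under the standing assumptions, for every finite collection of first-order formulas φ_1(x̄_1,y),…,φ_k(x̄_k,y) (where φ_i has p_i ≥ 0 further free variables besides the root variable y) there exist a single sequence (r_n) with r_n ∈ ξ(G_n) and a single vertex r ∈ ξ(L) such that lim_n ⟨φ_i,(G_n,r_n)⟩ = ⟨φ_i,(L,r)⟩ for every i ∈ {1,…,k}. -/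
open FirstOrder Language MeasureTheory Filter

open MvPolynomial Set
open scoped Classical
set_option linter.unusedSectionVars false
set_option linter.unusedVariables false
set_option maxHeartbeats 1000000

lemma sumEvalTendsto {k m : ℕ} {u : ℕ → Fin m → Fin k → ℝ} {v : Fin m → Fin k → ℝ}
    (hmom : ∀ e : Fin k → ℕ, Tendsto (fun n => ∑ j, ∏ i, u n j i ^ e i) atTop
      (nhds (∑ j, ∏ i, v j i ^ e i)))
    (P : MvPolynomial (Fin k) ℝ) :
    Tendsto (fun n => ∑ j, eval (u n j) P) atTop (nhds (∑ j, eval (v j) P)) := by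
  have hrw : ∀ (w : Fin m → Fin k → ℝ),
      ∑ j, eval (w j) P = ∑ d ∈ P.support, coeff d P * ∑ j, ∏ i, w j i ^ d i := by
    intro w
    simp_rw [eval_eq', Finset.mul_sum]
    rw [Finset.sum_comm]
  simp_rw [hrw]
  exact tendsto_finset_sum _ fun d _ => (hmom fun i => d i).const_mul _

lemma lemmaA {k m : ℕ} (u : ℕ → Fin m → Fin k → ℝ) (v : Fin m → Fin k → ℝ)
    (hu0 : ∀ n j i, 0 ≤ u n j i) (hu1 : ∀ n j i, u n j i ≤ 1)
    (hv0 : ∀ j i, 0 ≤ v j i) (hv1 : ∀ j i, v j i ≤ 1)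
    (hmom : ∀ e : Fin k → ℕ, Tendsto (fun n => ∑ j, ∏ i, u n j i ^ e i) atTop
      (nhds (∑ j, ∏ i, v j i ^ e i)))
    (j₀ : Fin m) :
    ∃ sel : ℕ → Fin m, ∀ i, Tendsto (fun n => u n (sel n) i) atTop (nhds (v j₀ i)) := by
  classical
  set v₀ : Fin k → ℝ := v j₀ with hv₀
  set d2 : (Fin k → ℝ) → ℝ := fun x => ∑ i, (x i - v₀ i) ^ 2 with hd2def
  have hd2nonneg : ∀ x, 0 ≤ d2 x := fun x => Finset.sum_nonneg fun i _ => sq_nonneg _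
  have hd2le : ∀ x, (∀ i, 0 ≤ x i ∧ x i ≤ 1) → d2 x ≤ k := by
    intro x hx
    calc d2 x ≤ ∑ _i : Fin k, (1 : ℝ) := by
          apply Finset.sum_le_sum
          intro i _
          have h1 : |x i - v₀ i| ≤ 1 := by
            rw [abs_le]
            constructor <;> nlinarith [(hx i).1, (hx i).2, hv0 j₀ i, hv1 j₀ i]
          calc (x i - v₀ i) ^ 2 = |x i - v₀ i| ^ 2 := (sq_abs _).symm
            _ ≤ 1 ^ 2 := by apply pow_le_pow_left₀ (abs_nonneg _) h1
            _ = 1 := one_pow 2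
      _ = k := by simp
  -- key step: eventually some root is ε-close
  have key : ∀ ε : ℝ, 0 < ε → ∀ᶠ n in atTop, ∃ j, d2 (u n j) < ε := by
    intro ε hε
    set θ : ℝ := max 0 (1 - ε / (k + 1)) with hθdef
    have hθ0 : 0 ≤ θ := le_max_left _ _
    have hθ1 : θ < 1 := by
      apply max_lt one_pos
      have : 0 < ε / (k + 1) := div_pos hε (by positivity)
      linarith
    obtain ⟨N, hN⟩ : ∃ N, θ ^ N < 1 / (2 * (m + 1)) := by
      have := tendsto_pow_atTop_nhds_zero_of_lt_one hθ0 hθ1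
      have h2 : (0:ℝ) < 1 / (2 * (m + 1)) := by positivity
      exact ((this.eventually (eventually_lt_nhds h2)).exists)
    set P : MvPolynomial (Fin k) ℝ :=
      (1 - (∑ i, (X i - C (v₀ i)) ^ 2) * C (1 / ((k:ℝ) + 1))) ^ (2 * N) with hPdef
    have hevalP : ∀ x, eval x P = (1 - d2 x * (1 / (k + 1))) ^ (2 * N) := by
      intro x
      simp [hPdef, hd2def]
    have hbmem : ∀ x, (∀ i, 0 ≤ x i ∧ x i ≤ 1) →
        0 ≤ 1 - d2 x * (1 / (k + 1)) ∧ 1 - d2 x * (1 / (k + 1)) ≤ 1 := by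
      intro x hx
      have h1 := hd2nonneg x
      have h2 := hd2le x hx
      have hk1 : (0:ℝ) < k + 1 := by positivity
      constructor
      · have : d2 x * (1 / (k + 1)) ≤ (k+1) * (1 / (k+1)) := by
          apply mul_le_mul_of_nonneg_right (by linarith) (by positivity)
        rw [mul_one_div_cancel (ne_of_gt hk1)] at this
        linarith
      · have : 0 ≤ d2 x * (1 / ((k:ℝ) + 1)) := mul_nonneg h1 (by positivity)
        linarith
    -- lower bound on limit
    have hlow : (1:ℝ) ≤ ∑ j, eval (v j) P := by
      have h0 : eval v₀ P = 1 := by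
        rw [hevalP]
        have : d2 v₀ = 0 := by
          simp [hd2def]
        rw [this]
        simp
      calc (1:ℝ) = eval (v j₀) P := by rw [← h0]
        _ ≤ ∑ j, eval (v j) P := by
          apply Finset.single_le_sum (f := fun j => eval (v j) P) _ (Finset.mem_univ j₀)
          intro j _
          rw [hevalP]
          apply pow_nonneg (hbmem (v j) fun i => ⟨hv0 j i, hv1 j i⟩).1
    have hev := (sumEvalTendsto hmom P).eventually
      (eventually_gt_nhds (show (∑ j, eval (v j) P) - 1/2 < ∑ j, eval (v j) P by linarith))
    filter_upwards [hev] with n hn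
    by_contra hcon
    push_neg at hcon
    have hbound : ∀ j, eval (u n j) P ≤ θ ^ (2 * N) := by
      intro j
      rw [hevalP]
      have hb := hbmem (u n j) fun i => ⟨hu0 n j i, hu1 n j i⟩
      apply pow_le_pow_left₀ hb.1
      have hd := hcon j
      have hk1 : (0:ℝ) < k + 1 := by positivity
      have : ε * (1 / (k + 1)) ≤ d2 (u n j) * (1 / (k + 1)) := by
        apply mul_le_mul_of_nonneg_right hd (by positivity)
      have h2 : 1 - d2 (u n j) * (1/((k:ℝ)+1)) ≤ 1 - ε / ((k:ℝ) + 1) := by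
        rw [div_eq_mul_one_div ε]
        linarith
      exact h2.trans (le_max_right _ _)
    have hsum : ∑ j, eval (u n j) P ≤ m * θ ^ (2 * N) := by
      calc ∑ j, eval (u n j) P ≤ ∑ _j : Fin m, θ ^ (2*N) :=
            Finset.sum_le_sum fun j _ => hbound j
        _ = m * θ ^ (2*N) := by simp [mul_comm]
    have hθ2N : θ ^ (2 * N) ≤ θ ^ N := by
      apply pow_le_pow_of_le_one hθ0 (le_of_lt hθ1)
      omega
    have hmθ : (m:ℝ) * θ ^ (2*N) < 1 / 2 := by
      have h3 : (m:ℝ) * θ ^ N ≤ m * (1 / (2 * (m + 1))) := by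
        apply mul_le_mul_of_nonneg_left (le_of_lt hN) (by positivity)
      have h4 : (m:ℝ) * (1 / (2 * (m + 1))) < 1 / 2 := by
        rw [mul_one_div, div_lt_div_iff₀ (by positivity) (by norm_num)]
        nlinarith [Nat.cast_nonneg (α := ℝ) m]
      have h5 : (m:ℝ) * θ ^ (2*N) ≤ m * θ ^ N :=
        mul_le_mul_of_nonneg_left hθ2N (Nat.cast_nonneg m)
      linarith
    have : ∑ j, eval (u n j) P < 1/2 := lt_of_le_of_lt hsum hmθ
    linarith
  -- selection: minimizer
  have hne : (Finset.univ : Finset (Fin m)).Nonempty := ⟨j₀, Finset.mem_univ j₀⟩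
  choose sel hsel hselmin using fun n =>
    Finset.exists_min_image Finset.univ (fun j => d2 (u n j)) hne
  refine ⟨sel, ?_⟩
  have hd2tend : Tendsto (fun n => d2 (u n (sel n))) atTop (nhds 0) := by
    rw [tendsto_order]
    constructor
    · intro a ha
      filter_upwards with n
      exact lt_of_lt_of_le ha (hd2nonneg _)
    · intro a ha
      filter_upwards [key a ha] with n ⟨j, hj⟩
      exact lt_of_le_of_lt (hselmin n j (Finset.mem_univ j)) hj
  intro i
  have hsq : Tendsto (fun n => (u n (sel n) i - v₀ i) ^ 2) atTop (nhds 0) := by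
    apply squeeze_zero (fun n => sq_nonneg _) _ hd2tend
    intro n
    exact Finset.single_le_sum (f := fun i' => (u n (sel n) i' - v₀ i') ^ 2)
      (fun i' _ => sq_nonneg _) (Finset.mem_univ i)
  have habs : Tendsto (fun n => |u n (sel n) i - v₀ i|) atTop (nhds 0) := by
    have hsqrt : Tendsto Real.sqrt (nhds 0) (nhds 0) := by
      simpa using (Real.continuous_sqrt.tendsto 0)
    have := hsqrt.comp hsq
    simpa [Function.comp_def, Real.sqrt_sq_eq_abs] using this
  rw [← tendsto_sub_nhds_zero_iff]
  exact (tendsto_zero_iff_abs_tendsto_zero _).mpr habs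


open MeasureTheory Filter

section cores
variable {U X : Type}

lemma sum_ite_Icc {c m : ℕ} (hc : c ≤ m) :
    (∑ j ∈ Finset.Icc 1 m, if j ≤ c then (1:ℕ) else 0) = c := by
  rw [← Finset.card_filter]
  have : (Finset.Icc 1 m).filter (fun j => j ≤ c) = Finset.Icc 1 c := by
    ext j
    simp only [Finset.mem_filter, Finset.mem_Icc]
    omega
  rw [this, Nat.card_Icc]
  omega

/-- counting function -/
noncomputable def cfun (R : Finset U) (A : U → Set X) (x : X) : ℕ :=
  ∑ r ∈ R, (A r).indicator 1 x

lemma cfun_le (R : Finset U) (A : U → Set X) (x : X) : cfun R A x ≤ R.card := by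
  classical
  unfold cfun
  calc ∑ r ∈ R, (A r).indicator 1 x ≤ ∑ _r ∈ R, 1 := by
        apply Finset.sum_le_sum
        intro r _
        by_cases h : x ∈ A r <;> simp [h]
    _ = R.card := by simp

lemma sum_ite_Icc_cfun (R : Finset U) (A : U → Set X) (x : X) :
    (∑ j ∈ Finset.Icc 1 R.card, if j ≤ cfun R A x then (1:ℕ) else 0) = cfun R A x :=
  sum_ite_Icc (cfun_le R A x)

lemma natcard_eq_sum_indicator [Fintype X] (S : Set X) :
    Nat.card S = ∑ x : X, S.indicator 1 x := by
  classical
  rw [Nat.card_eq_fintype_card, Fintype.card_subtype, Finset.card_filter]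
  apply Finset.sum_congr rfl
  intro x _
  by_cases h : x ∈ S <;> simp [h]

lemma core_card [Fintype X] (R : Finset U) (A : U → Set X) :
    ∑ j ∈ Finset.Icc 1 R.card, Nat.card {x : X | j ≤ cfun R A x}
      = ∑ r ∈ R, Nat.card (A r) := by
  classical
  calc ∑ j ∈ Finset.Icc 1 R.card, Nat.card {x : X | j ≤ cfun R A x}
      = ∑ j ∈ Finset.Icc 1 R.card, ∑ x : X, ({x : X | j ≤ cfun R A x}).indicator 1 x := by
        apply Finset.sum_congr rfl
        intro j _
        exact natcard_eq_sum_indicator _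
    _ = ∑ x : X, ∑ j ∈ Finset.Icc 1 R.card, ({x : X | j ≤ cfun R A x}).indicator 1 x :=
        Finset.sum_comm
    _ = ∑ x : X, cfun R A x := by
        apply Finset.sum_congr rfl
        intro x _
        have h1 : ∀ j, ({x : X | j ≤ cfun R A x}).indicator (1 : X → ℕ) x
            = if j ≤ cfun R A x then (1:ℕ) else 0 := by
          intro j
          by_cases h : j ≤ cfun R A x <;> simp [h, Set.indicator_apply]
        simp_rw [h1]
        exact sum_ite_Icc_cfun R A x
    _ = ∑ x : X, ∑ r ∈ R, (A r).indicator 1 x := rfl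
    _ = ∑ r ∈ R, ∑ x : X, (A r).indicator 1 x := Finset.sum_comm
    _ = ∑ r ∈ R, Nat.card (A r) := by
        apply Finset.sum_congr rfl
        intro r _
        exact (natcard_eq_sum_indicator _).symm

lemma core_meas [MeasurableSpace X] (μ : Measure X) (R : Finset U) (A : U → Set X)
    (hA : ∀ r, MeasurableSet (A r)) :
    ∑ j ∈ Finset.Icc 1 R.card, μ {x : X | j ≤ cfun R A x} = ∑ r ∈ R, μ (A r) := by
  classical
  have hcmeas : Measurable (cfun R A) := by
    unfold cfun
    apply Finset.measurable_sum
    intro r _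
    exact Measurable.indicator measurable_const (hA r)
  have hS : ∀ j : ℕ, MeasurableSet {x : X | j ≤ cfun R A x} := by
    intro j
    exact hcmeas (MeasurableSpace.measurableSet_top)
  calc ∑ j ∈ Finset.Icc 1 R.card, μ {x : X | j ≤ cfun R A x}
      = ∑ j ∈ Finset.Icc 1 R.card, ∫⁻ x, ({x : X | j ≤ cfun R A x}).indicator (1 : X → ENNReal) x ∂μ := by
        apply Finset.sum_congr rfl
        intro j _
        rw [lintegral_indicator_one (hS j)]
    _ = ∫⁻ x, ∑ j ∈ Finset.Icc 1 R.card, ({x : X | j ≤ cfun R A x}).indicator (1 : X → ENNReal) x ∂μ := by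
        rw [lintegral_finset_sum]
        intro j _
        exact Measurable.indicator measurable_const (hS j)
    _ = ∫⁻ x, ∑ r ∈ R, (A r).indicator (1 : X → ENNReal) x ∂μ := by
        congr 1
        funext x
        have h1 : ∑ j ∈ Finset.Icc 1 R.card, ({x : X | j ≤ cfun R A x}).indicator (1 : X → ENNReal) x
            = ((cfun R A x : ℕ) : ENNReal) := by
          have := sum_ite_Icc_cfun R A x
          calc ∑ j ∈ Finset.Icc 1 R.card, ({x : X | j ≤ cfun R A x}).indicator (1 : X → ENNReal) x
              = ∑ j ∈ Finset.Icc 1 R.card, ((if j ≤ cfun R A x then (1:ℕ) else 0 : ℕ) : ENNReal) := by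
                apply Finset.sum_congr rfl
                intro j _
                by_cases h : j ≤ cfun R A x <;> simp [h, Set.indicator_apply]
            _ = ((∑ j ∈ Finset.Icc 1 R.card, if j ≤ cfun R A x then (1:ℕ) else 0 : ℕ) : ENNReal) := by
                rw [Nat.cast_sum]
            _ = ((cfun R A x : ℕ) : ENNReal) := by rw [this]
        have h2 : ∑ r ∈ R, (A r).indicator (1 : X → ENNReal) x = ((cfun R A x : ℕ) : ENNReal) := by
          unfold cfun
          rw [Nat.cast_sum]
          apply Finset.sum_congr rfl
          intro r _
          by_cases h : x ∈ A r <;> simp [h, Set.indicator_apply]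
        rw [h1, h2]
    _ = ∑ r ∈ R, ∫⁻ x, (A r).indicator (1 : X → ENNReal) x ∂μ := by
        rw [lintegral_finset_sum]
        intro r _
        exact Measurable.indicator measurable_const (hA r)
    _ = ∑ r ∈ R, μ (A r) := by
        apply Finset.sum_congr rfl
        intro r _
        rw [lintegral_indicator_one (hA r)]
end cores



section fact
variable {ι : Type} [Fintype ι] {β : ι → Type} [∀ a, Fintype (β a)]
  {W : Type} [MeasurableSpace W]

/-- the (un)currying map for sigma-indexed products -/
def curryMap (β : ι → Type) (W : Type) : ((Σ a, β a) → W) → (∀ a, β a → W) :=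
  fun x a b => x ⟨a, b⟩

lemma measurable_curryMap : Measurable (curryMap β W) :=
  measurable_pi_lambda _ fun a => measurable_pi_lambda _ fun b => measurable_pi_apply _

lemma map_curryMap (ν : Measure W) [IsProbabilityMeasure ν] :
    Measure.map (curryMap β W) (Measure.pi fun _ : (Σ a, β a) => ν)
      = Measure.pi (fun a => Measure.pi (fun _ : β a => ν)) := by
  classical
  symm
  apply Measure.pi_eq_generateFrom
    (C := fun a => Set.pi univ '' Set.pi univ fun _b : β a => { s : Set W | MeasurableSet s })
    (fun a => generateFrom_pi)
    (fun a => isPiSystem_pi)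
  · intro a
    exact ⟨fun _ => univ,
      fun _ => ⟨fun _ => univ, fun b _ => MeasurableSet.univ, Set.pi_univ _⟩,
      fun _ => by simp [measure_lt_top], by rw [Set.iUnion_const]⟩
  · rintro s hs
    choose t ht hteq using fun a => hs a
    have hpre : curryMap β W ⁻¹' (Set.pi univ s) = Set.pi univ (fun p : Σ a, β a => t p.1 p.2) := by
      ext x
      simp only [mem_preimage, mem_univ_pi, curryMap]
      constructor
      · intro h p
        have := h p.1
        rw [← hteq p.1] at this
        exact this p.2 (mem_univ _)
      · intro h a
        rw [← hteq a]
        intro b _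
        exact h ⟨a, b⟩
    rw [Measure.map_apply measurable_curryMap (MeasurableSet.univ_pi (fun a => by
      rw [← hteq a]; exact MeasurableSet.univ_pi fun b => ht a b (mem_univ b)))]
    rw [hpre, Measure.pi_pi, ← Finset.univ_sigma_univ, Finset.prod_sigma]
    apply Finset.prod_congr rfl
    intro a _
    rw [← hteq a, Measure.pi_pi]

lemma pi_block_meas (ν : Measure W) [IsProbabilityMeasure ν]
    (S : ∀ a, Set (β a → W)) (hS : ∀ a, MeasurableSet (S a)) :
    Measure.pi (fun _ : (Σ a, β a) => ν) {x | ∀ a, (fun b => x ⟨a, b⟩) ∈ S a}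
      = ∏ a, Measure.pi (fun _ : β a => ν) (S a) := by
  have h1 : {x : (Σ a, β a) → W | ∀ a, (fun b => x ⟨a, b⟩) ∈ S a}
      = curryMap β W ⁻¹' (Set.pi univ (fun a => S a)) := by
    ext x
    simp only [mem_preimage, Set.mem_univ_pi, Set.mem_setOf_eq, curryMap]
    exact Iff.rfl
  rw [h1, ← Measure.map_apply measurable_curryMap (MeasurableSet.univ_pi hS),
    map_curryMap ν, Measure.pi_pi]

/-- cardinality version -/
lemma pi_block_card {V : Type} (S : ∀ a, Set (β a → V)) :
    Nat.card {x : (Σ a, β a) → V | ∀ a, (fun b => x ⟨a, b⟩) ∈ S a}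
      = ∏ a, Nat.card (S a) := by
  rw [← Nat.card_pi]
  apply Nat.card_congr
  refine ⟨fun x a => ⟨fun b => x.1 ⟨a, b⟩, x.2 a⟩, fun f => ⟨fun p => (f p.1).1 p.2, fun a => (f a).2⟩, ?_, ?_⟩
  · intro x
    ext p
    rfl
  · intro f
    ext a b
    rfl
end fact

section FO

/-- conjunction over a finset -/
noncomputable def finsetInf {L : Language} {α : Type*} {n : ℕ} {β : Type*} (s : Finset β)
    (f : β → L.BoundedFormula α n) : L.BoundedFormula α n :=
  (s.toList.map f).foldr (· ⊓ ·) ⊤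

lemma realize_iInf' {L : Language} {α β : Type*} {M : Type*} [L.Structure M] (s : Finset β)
    (f : β → L.Formula α) (v : α → M) :
    Formula.Realize (finsetInf s f) v ↔ ∀ b ∈ s, (f b).Realize v := by
  simp [Formula.Realize, finsetInf, BoundedFormula.realize_foldr_inf]

variable {k : ℕ} (ps : Fin k → ℕ) (φ : ∀ i : Fin k, Language.graph.Formula (Fin (ps i + 1)))
  (ξ : Language.graph.Formula (Fin 1)) (e : Fin k → ℕ)

/-- block index type -/
abbrev A0 (e : Fin k → ℕ) : Type := Σ i : Fin k, Fin (e i)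

/-- variable index type -/
abbrev Bt (ps : Fin k → ℕ) (e : Fin k → ℕ) : Type := Σ a : A0 e, Fin (ps a.1)

/-- variable renaming for block `a` -/
def fmap (a : A0 e) : Fin (ps a.1 + 1) → (Bt ps e ⊕ Fin 1) :=
  Fin.lastCases (Sum.inr 0) (fun j => Sum.inl ⟨a, j⟩)

/-- conjunction of all copies -/
noncomputable def PsiF : Language.graph.Formula (Bt ps e ⊕ Fin 1) :=
  finsetInf Finset.univ (fun a : A0 e => (φ a.1).relabel (fmap ps e a))

/-- conjunction with root in ξ -/
noncomputable def chiF : Language.graph.Formula (Bt ps e ⊕ Fin 1) :=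
  PsiF ps φ e ⊓ ξ.relabel (fun _ => Sum.inr 0)

/-- at least `j` roots -/
noncomputable def thetaF (j : ℕ) : Language.graph.Formula (Bt ps e) :=
  Formula.iExs (β := Fin j)
    ((finsetInf Finset.univ fun l : Fin j =>
        (chiF ps φ ξ e).relabel (Sum.map id fun _ : Fin 1 => l)) ⊓
      finsetInf Finset.univ.offDiag fun p : Fin j × Fin j =>
        Formula.not (Term.equal (Term.var (Sum.inr p.1)) (Term.var (Sum.inr p.2))))

variable {U : Type} (H : SimpleGraph U)

/-- root set of a tuple -/
def RootSet (x : Bt ps e → U) : Set U :=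
  {r | r ∈ sol1 H ξ ∧ ∀ a : A0 e, (fun b => x ⟨a, b⟩) ∈ solSetR H (φ a.1) r}

lemma realize_PsiF (x : Bt ps e → U) (y : Fin 1 → U) :
    letI := H.structure
    ((PsiF ps φ e).Realize (Sum.elim x y) ↔
      ∀ a : A0 e, (fun b => x ⟨a, b⟩) ∈ solSetR H (φ a.1) (y 0)) := by
  letI := H.structure
  rw [PsiF, realize_iInf']
  simp only [Finset.mem_univ, true_implies]
  apply forall_congr'
  intro a
  rw [Formula.realize_relabel]
  have hco : (Sum.elim x y) ∘ fmap ps e a = Fin.snoc (fun b => x ⟨a, b⟩) (y 0) := by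
    funext j
    refine Fin.lastCases ?_ ?_ j
    · simp [fmap, Fin.snoc_last]
    · intro j'
      simp [fmap, Fin.snoc_castSucc]
  rw [hco]
  rfl

lemma realize_chiF (x : Bt ps e → U) (y : Fin 1 → U) :
    letI := H.structure
    ((chiF ps φ ξ e).Realize (Sum.elim x y) ↔
      (y 0 ∈ sol1 H ξ ∧ ∀ a : A0 e, (fun b => x ⟨a, b⟩) ∈ solSetR H (φ a.1) (y 0))) := by
  letI := H.structure
  rw [chiF, Formula.realize_inf, realize_PsiF, Formula.realize_relabel]
  have hco : (Sum.elim x y) ∘ (fun _ : Fin 1 => Sum.inr 0 : Fin 1 → Bt ps e ⊕ Fin 1)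
      = fun _ => y 0 := by
    funext j
    rfl
  rw [hco]
  constructor
  · rintro ⟨h1, h2⟩
    exact ⟨h2, h1⟩
  · rintro ⟨h1, h2⟩
    exact ⟨h2, h1⟩

lemma exists_inj_iff_le_ncard {S : Set U} (hS : S.Finite) {j : ℕ} :
    (∃ y : Fin j → U, Function.Injective y ∧ ∀ l, y l ∈ S) ↔ j ≤ S.ncard := by
  constructor
  · rintro ⟨y, hinj, hmem⟩
    have h1 : Set.range y ⊆ S := by
      rintro _ ⟨l, rfl⟩
      exact hmem l
    have h2 : (Set.range y).ncard = j := by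
      calc (Set.range y).ncard = (y '' Set.univ).ncard := by rw [Set.image_univ]
        _ = (Set.univ : Set (Fin j)).ncard := Set.ncard_image_of_injective _ hinj
        _ = Nat.card (Fin j) := Set.ncard_univ _
        _ = j := by simp
    calc j = (Set.range y).ncard := h2.symm
      _ ≤ S.ncard := Set.ncard_le_ncard h1 hS
  · intro hj
    classical
    have hcard : j ≤ hS.toFinset.card := by
      rwa [Set.ncard_eq_toFinset_card S hS] at hj
    obtain ⟨t, hts, htcard⟩ := Finset.exists_subset_card_eq hcard
    have : Nonempty (Fin j ≃ {x // x ∈ t}) := by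
      rw [← htcard]
      exact ⟨(t.equivFin).symm⟩
    obtain ⟨g⟩ := this
    refine ⟨fun l => (g l).1, ?_, ?_⟩
    · intro l1 l2 h
      exact g.injective (Subtype.ext h)
    · intro l
      have := hts (g l).2
      rwa [Set.Finite.mem_toFinset] at this

lemma realize_thetaF (j : ℕ) (x : Bt ps e → U) (hfin : (sol1 H ξ).Finite) :
    letI := H.structure
    ((thetaF ps φ ξ e j).Realize x ↔ j ≤ (RootSet ps φ ξ e H x).ncard) := by
  letI := H.structure
  have hfinR : (RootSet ps φ ξ e H x).Finite := hfin.subset (fun r hr => hr.1)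
  rw [thetaF, Formula.realize_iExs, ← exists_inj_iff_le_ncard hfinR]
  apply exists_congr
  intro y
  have hval : ∀ l : Fin j, (Sum.elim x y ∘ Sum.map id (fun _ : Fin 1 => l))
      = Sum.elim x (fun _ => y l) := by
    intro l
    funext s
    cases s <;> rfl
  rw [Formula.realize_inf, realize_iInf', realize_iInf']
  simp only [Finset.mem_univ, true_implies, Formula.realize_relabel, hval]
  simp only [realize_chiF ps φ ξ e H x]
  constructor
  · rintro ⟨h1, h2⟩
    constructor
    · intro l1 l2 hEq
      by_contra hne
      have := h2 (l1, l2) (Finset.mem_offDiag.mpr ⟨Finset.mem_univ _, Finset.mem_univ _, hne⟩)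
      rw [Formula.realize_not, Formula.realize_equal] at this
      apply this
      simp only [Term.realize_var, Sum.elim_inr]
      exact hEq
    · intro l
      exact (h1 l)
  · rintro ⟨hinj, hmem⟩
    constructor
    · intro l
      exact hmem l
    · intro p hp
      rw [Formula.realize_not, Formula.realize_equal]
      simp only [Term.realize_var, Sum.elim_inr]
      have hne := (Finset.mem_offDiag.mp hp).2.2
      exact fun hEq => hne (hinj hEq)

end FO

section transfer

lemma natcard_preimage_equiv {γ δ : Type} (E : γ ≃ δ) (T : Set δ) :
    Nat.card (⇑E ⁻¹' T) = Nat.card T :=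
  Nat.card_congr (Equiv.subtypeEquiv E fun _ => Iff.rfl)

lemma cfun_eq_ncard {U X : Type} (R : Finset U) (A : U → Set X) (x : X) :
    ({r | r ∈ R ∧ x ∈ A r} : Set U).ncard = cfun R A x := by
  classical
  have h1 : ({r | r ∈ R ∧ x ∈ A r} : Set U) = ↑(R.filter (fun r => x ∈ A r)) := by
    ext r
    simp [Finset.mem_filter]
  rw [h1, Set.ncard_coe_finset, Finset.card_filter]
  unfold cfun
  apply Finset.sum_congr rfl
  intro r _
  by_cases h : x ∈ A r <;> simp [h]

variable {k : ℕ} (ps : Fin k → ℕ) (φ : ∀ i : Fin k, Language.graph.Formula (Fin (ps i + 1)))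
  (ξ : Language.graph.Formula (Fin 1)) (e : Fin k → ℕ)

/-- enumeration of the variable index type -/
noncomputable def eB : Bt ps e ≃ Fin (Fintype.card (Bt ps e)) := Fintype.equivFin _

/-- the `Fin`-relabeled counting formula -/
noncomputable def thetaFin (j : ℕ) :
    Language.graph.Formula (Fin (Fintype.card (Bt ps e))) :=
  (thetaF ps φ ξ e j).relabel (fun b => eB ps e b)

variable {U : Type} (H : SimpleGraph U)

/-- the set of tuples whose blocks all satisfy the formulas at root `r` -/
def blockSet (r : U) : Set (Bt ps e → U) :=
  {x | ∀ a : A0 e, (fun b => x ⟨a, b⟩) ∈ solSetR H (φ a.1) r}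

lemma solSet_thetaFin (j : ℕ) :
    solSet H (thetaFin ps φ ξ e j)
      = (fun v : Fin (Fintype.card (Bt ps e)) → U => v ∘ (eB ps e)) ⁻¹'
        {x : Bt ps e → U | letI := H.structure; (thetaF ps φ ξ e j).Realize x} := by
  letI := H.structure
  ext v
  simp only [solSet, Set.mem_setOf_eq, Set.mem_preimage]
  rw [thetaFin, Formula.realize_relabel]

lemma theta_set_eq (hfin : (sol1 H ξ).Finite) (j : ℕ) :
    {x : Bt ps e → U | letI := H.structure; (thetaF ps φ ξ e j).Realize x}
      = {x : Bt ps e → U | j ≤ cfun hfin.toFinset (blockSet ps φ e H) x} := by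
  letI := H.structure
  ext x
  rw [Set.mem_setOf_eq, Set.mem_setOf_eq, realize_thetaF ps φ ξ e H j x hfin]
  have h1 : RootSet ps φ ξ e H x
      = {r | r ∈ hfin.toFinset ∧ x ∈ blockSet ps φ e H r} := by
    ext r
    simp only [RootSet, Set.mem_setOf_eq, Set.Finite.mem_toFinset, blockSet]
  rw [h1, cfun_eq_ncard]

lemma prod_sigma_pow {M : Type} [CommMonoid M] (g : Fin k → M) :
    ∏ i, g i ^ e i = ∏ a : A0 e, g a.1 := by
  rw [← Finset.univ_sigma_univ, Finset.prod_sigma]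
  simp [Finset.prod_const]

lemma cardU_pow_cB (c : ℝ) :
    (c : ℝ) ^ (Fintype.card (Bt ps e)) = ∏ a : A0 e, c ^ (ps a.1) := by
  rw [Finset.prod_pow_eq_pow_sum]
  congr 1
  rw [Fintype.card_sigma]
  simp

/-- G-side identity -/
lemma sumG (fU : Fintype U) (hfin : (sol1 H ξ).Finite) :
    ∑ j ∈ Finset.Icc 1 (hfin.toFinset.card),
        stoneG fU H (thetaFin ps φ ξ e j)
      = ∑ r ∈ hfin.toFinset, ∏ i, stoneGR fU H (φ i) r ^ e i := by
  classical
  set R := hfin.toFinset with hR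
  have hcardsol : ∀ j, Nat.card (solSet H (thetaFin ps φ ξ e j))
      = Nat.card {x : Bt ps e → U | j ≤ cfun R (blockSet ps φ e H) x} := by
    intro j
    rw [solSet_thetaFin, theta_set_eq ps φ ξ e H hfin j]
    have hfun : (fun v : Fin (Fintype.card (Bt ps e)) → U => v ∘ (eB ps e))
        = ⇑(Equiv.arrowCongr (eB ps e).symm (Equiv.refl U)) := by
      funext v
      rfl
    rw [hfun, natcard_preimage_equiv]
  have hstG : ∀ j, stoneG fU H (thetaFin ps φ ξ e j)
      = (Nat.card {x : Bt ps e → U | j ≤ cfun R (blockSet ps φ e H) x} : ℝ)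
          / (Fintype.card U : ℝ) ^ (Fintype.card (Bt ps e)) := by
    intro j
    rw [stoneG, hcardsol j]
  have hblock : ∀ r, (Nat.card (blockSet ps φ e H r) : ℝ)
      = ∏ a : A0 e, (Nat.card (solSetR H (φ a.1) r) : ℝ) := by
    intro r
    rw [blockSet, pi_block_card]
    push_cast
    rfl
  calc ∑ j ∈ Finset.Icc 1 R.card, stoneG fU H (thetaFin ps φ ξ e j)
      = (∑ j ∈ Finset.Icc 1 R.card,
          (Nat.card {x : Bt ps e → U | j ≤ cfun R (blockSet ps φ e H) x} : ℝ))
          / (Fintype.card U : ℝ) ^ (Fintype.card (Bt ps e)) := by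
        rw [Finset.sum_div]
        exact Finset.sum_congr rfl fun j _ => hstG j
    _ = ((∑ r ∈ R, Nat.card (blockSet ps φ e H r) : ℕ) : ℝ)
          / (Fintype.card U : ℝ) ^ (Fintype.card (Bt ps e)) := by
        congr 1
        rw [← core_card R (blockSet ps φ e H)]
        push_cast
        rfl
    _ = ∑ r ∈ R, ∏ i, stoneGR fU H (φ i) r ^ e i := by
        push_cast
        rw [Finset.sum_div]
        apply Finset.sum_congr rfl
        intro r _
        rw [hblock r, cardU_pow_cB, ← Finset.prod_div_distrib,
          prod_sigma_pow e (fun i => stoneGR fU H (φ i) r)]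
        apply Finset.prod_congr rfl
        intro a _
        rfl

end transfer

section Lside

variable {k : ℕ} (ps : Fin k → ℕ) (φ : ∀ i : Fin k, Language.graph.Formula (Fin (ps i + 1)))
  (ξ : Language.graph.Formula (Fin 1)) (e : Fin k → ℕ)
  {W : Type} [MeasurableSpace W]

lemma measurable_snocMap (p : ℕ) (r : W) :
    Measurable (fun v : Fin p → W => (Fin.snoc v r : Fin (p + 1) → W)) := by
  apply measurable_pi_lambda
  intro j
  refine Fin.lastCases ?_ ?_ j
  · simp_rw [Fin.snoc_last]
    exact measurable_const
  · intro j'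
    simp_rw [Fin.snoc_castSucc]
    exact measurable_pi_apply _

variable (L : SimpleGraph W)
  (hmeas : ∀ (p : ℕ) (ψ : Language.graph.Formula (Fin p)), MeasurableSet (solSet L ψ))

include hmeas in
lemma solSetR_meas {p : ℕ} (ψ : Language.graph.Formula (Fin (p + 1))) (r : W) :
    MeasurableSet (solSetR L ψ r) := by
  have h1 : solSetR L ψ r
      = (fun v : Fin p → W => (Fin.snoc v r : Fin (p + 1) → W)) ⁻¹' solSet L ψ := rfl
  rw [h1]
  exact (measurable_snocMap p r) (hmeas _ ψ)

include hmeas in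
lemma blockSet_meas (r : W) : MeasurableSet (blockSet ps φ e L r) := by
  have h1 : blockSet ps φ e L r = ⋂ a : A0 e,
      (fun (x : Bt ps e → W) (b : Fin (ps a.1)) => x ⟨a, b⟩) ⁻¹' solSetR L (φ a.1) r := by
    ext x
    simp [blockSet, Set.mem_iInter]
  rw [h1]
  exact MeasurableSet.iInter fun a =>
    (measurable_pi_lambda _ fun b => measurable_pi_apply _) (solSetR_meas L hmeas (φ a.1) r)

lemma measurableSet_le_cfun {U : Type} (R : Finset U) (A : U → Set W)
    (hA : ∀ r, MeasurableSet (A r)) (j : ℕ) :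
    MeasurableSet {x : W | j ≤ cfun R A x} := by
  have hcmeas : Measurable (cfun R A) := by
    unfold cfun
    apply Finset.measurable_sum
    intro r _
    exact Measurable.indicator measurable_const (hA r)
  exact hcmeas (MeasurableSpace.measurableSet_top)

lemma meas_preimage_eB (ν : Measure W) [IsProbabilityMeasure ν]
    (T : Set (Bt ps e → W)) (hT : MeasurableSet T) :
    (Measure.pi fun _ : Fin (Fintype.card (Bt ps e)) => ν)
        ((fun v => v ∘ (eB ps e)) ⁻¹' T)
      = (Measure.pi fun _ : Bt ps e => ν) T := by
  have mp := measurePreserving_piCongrLeft (fun _ : Bt ps e => ν) (eB ps e).symm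
  have hco : ⇑(MeasurableEquiv.piCongrLeft (fun _ : Bt ps e => W) (eB ps e).symm)
      = fun v => v ∘ (eB ps e) := by
    funext v
    funext b
    have h2 : b = (eB ps e).symm ((eB ps e) b) := (Equiv.symm_apply_apply _ _).symm
    conv_lhs => rw [h2]
    rw [MeasurableEquiv.piCongrLeft_apply_apply]
    rfl
  rw [← hco]
  exact mp.measure_preimage hT.nullMeasurableSet

include hmeas in
/-- L-side identity -/
lemma sumL (ν : Measure W) [IsProbabilityMeasure ν] (hfin : (sol1 L ξ).Finite) :
    ∑ j ∈ Finset.Icc 1 hfin.toFinset.card, stoneL L ν (thetaFin ps φ ξ e j)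
      = ∑ r ∈ hfin.toFinset, ∏ i, stoneLR L ν (φ i) r ^ e i := by
  classical
  set R := hfin.toFinset with hR
  set μB := (Measure.pi fun _ : Bt ps e => ν) with hμB
  have hstL : ∀ j, stoneL L ν (thetaFin ps φ ξ e j)
      = (μB {x : Bt ps e → W | j ≤ cfun R (blockSet ps φ e L) x}).toReal := by
    intro j
    rw [stoneL, solSet_thetaFin, theta_set_eq ps φ ξ e L hfin j,
      meas_preimage_eB ps e ν _ (measurableSet_le_cfun _ _ (blockSet_meas ps φ e L hmeas) j)]
  have hcore := core_meas μB R (blockSet ps φ e L) (blockSet_meas ps φ e L hmeas)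
  calc ∑ j ∈ Finset.Icc 1 R.card, stoneL L ν (thetaFin ps φ ξ e j)
      = ∑ j ∈ Finset.Icc 1 R.card,
          (μB {x : Bt ps e → W | j ≤ cfun R (blockSet ps φ e L) x}).toReal := by
        exact Finset.sum_congr rfl fun j _ => hstL j
    _ = (∑ j ∈ Finset.Icc 1 R.card,
          μB {x : Bt ps e → W | j ≤ cfun R (blockSet ps φ e L) x}).toReal := by
        rw [ENNReal.toReal_sum]
        intro j _
        exact measure_ne_top _ _
    _ = (∑ r ∈ R, μB (blockSet ps φ e L r)).toReal := by rw [hcore]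
    _ = ∑ r ∈ R, (μB (blockSet ps φ e L r)).toReal := by
        rw [ENNReal.toReal_sum]
        intro r _
        exact measure_ne_top _ _
    _ = ∑ r ∈ R, ∏ i, stoneLR L ν (φ i) r ^ e i := by
        apply Finset.sum_congr rfl
        intro r _
        have h1 : μB (blockSet ps φ e L r)
            = ∏ a : A0 e, (Measure.pi fun _ : Fin (ps a.1) => ν) (solSetR L (φ a.1) r) := by
          rw [hμB, blockSet, pi_block_meas ν _ (fun a => solSetR_meas L hmeas (φ a.1) r)]
        rw [h1, ENNReal.toReal_prod,
          prod_sigma_pow e (fun i => stoneLR L ν (φ i) r)]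
        apply Finset.prod_congr rfl
        intro a _
        rfl

end Lside

section bounds

lemma stoneGR_nonneg {U : Type} (fU : Fintype U) (H : SimpleGraph U) {p : ℕ}
    (ψ : Language.graph.Formula (Fin (p + 1))) (r : U) : 0 ≤ stoneGR fU H ψ r := by
  rw [stoneGR]
  positivity

lemma stoneGR_le_one {U : Type} (fU : Fintype U) (hne : Nonempty U) (H : SimpleGraph U) {p : ℕ}
    (ψ : Language.graph.Formula (Fin (p + 1))) (r : U) : stoneGR fU H ψ r ≤ 1 := by
  rw [stoneGR]
  have hpos : (0:ℝ) < (Fintype.card U : ℝ) ^ p := by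
    have := Fintype.card_pos (α := U)
    positivity
  rw [div_le_one hpos]
  have h1 : Nat.card (solSetR H ψ r) ≤ Nat.card (Fin p → U) :=
    Nat.card_le_card_of_injective (Subtype.val) Subtype.val_injective
  have h2 : Nat.card (Fin p → U) = Fintype.card U ^ p := by
    rw [Nat.card_eq_fintype_card, Fintype.card_fun]
    simp
  calc (Nat.card (solSetR H ψ r) : ℝ) ≤ (Nat.card (Fin p → U) : ℝ) := by exact_mod_cast h1
    _ = (Fintype.card U : ℝ) ^ p := by rw [h2]; push_cast; rfl

lemma stoneLR_nonneg {W : Type} [MeasurableSpace W] (L : SimpleGraph W) (ν : Measure W)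
    {p : ℕ} (ψ : Language.graph.Formula (Fin (p + 1))) (r : W) : 0 ≤ stoneLR L ν ψ r :=
  ENNReal.toReal_nonneg

lemma stoneLR_le_one {W : Type} [MeasurableSpace W] (L : SimpleGraph W) (ν : Measure W)
    [IsProbabilityMeasure ν] {p : ℕ} (ψ : Language.graph.Formula (Fin (p + 1))) (r : W) :
    stoneLR L ν ψ r ≤ 1 := by
  rw [stoneLR]
  have h1 : (Measure.pi fun _ : Fin p => ν) (solSetR L ψ r) ≤ 1 := prob_le_one
  calc ((Measure.pi fun _ : Fin p => ν) (solSetR L ψ r)).toReal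
      ≤ (1 : ENNReal).toReal := ENNReal.toReal_mono ENNReal.one_ne_top h1
    _ = 1 := by simp

end bounds

/-- Lemma: rooting for a finite collection of formulas. -/
theorem rooting_for_finite_collection_of_formulas

    (V : ℕ → Type) (fV : ∀ n, Fintype (V n)) (hVne : ∀ n, Nonempty (V n))
    (G : ∀ n, SimpleGraph (V n))
    (W : Type) [MeasurableSpace W] [StandardBorelSpace W]
    (L : SimpleGraph W) (ν : Measure W) [IsProbabilityMeasure ν]
    (hmeas : ∀ (p : ℕ) (φ : Language.graph.Formula (Fin p)), MeasurableSet (solSet L φ))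
    (hFOconv : ∀ (p : ℕ) (φ : Language.graph.Formula (Fin p)),
      ∃ c : ℝ, Tendsto (fun n => stoneG (fV n) (G n) φ) atTop (nhds c))
    (hlim : ∀ (p : ℕ) (φ : Language.graph.Formula (Fin p)),
      Tendsto (fun n => stoneG (fV n) (G n) φ) atTop (nhds (stoneL L ν φ)))
    (ξ : Language.graph.Formula (Fin 1))
    (hfin : (sol1 L ξ).Finite) (hnonempty : (sol1 L ξ).Nonempty)
    (hmin : ∀ ψ : Language.graph.Formula (Fin 1),
      sol1 L ψ ⊆ sol1 L ξ → sol1 L ψ = ∅ ∨ sol1 L ψ = sol1 L ξ)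
    (hcard : ∀ n, Nat.card (sol1 (G n) ξ) = Nat.card (sol1 L ξ))
    (k : ℕ) (ps : Fin k → ℕ) (φ : ∀ i : Fin k, Language.graph.Formula (Fin (ps i + 1))) :
    ∃ (rs : (n : ℕ) → V n) (r : W), (∀ n, rs n ∈ sol1 (G n) ξ) ∧ r ∈ sol1 L ξ ∧
      ∀ i : Fin k,
        Tendsto (fun n => stoneGR (fV n) (G n) (φ i) (rs n)) atTop
          (nhds (stoneLR L ν (φ i) r)) := by
  classical
  set m := Nat.card (sol1 L ξ) with hmdef
  have hmpos : 0 < m := by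
    have h1 : Nonempty (sol1 L ξ) := hnonempty.to_subtype
    have h2 : Finite (sol1 L ξ) := hfin.to_subtype
    exact Nat.card_pos
  have hGfin : ∀ n, (sol1 (G n) ξ).Finite := fun n => Set.toFinite _
  have hRLcard : hfin.toFinset.card = m := by
    rw [hmdef, Nat.card_coe_set_eq, Set.ncard_eq_toFinset_card _ hfin]
  have hRncard : ∀ n, (hGfin n).toFinset.card = m := by
    intro n
    have h0 : (hGfin n).toFinset.card = Nat.card (sol1 (G n) ξ) := by
      rw [Nat.card_coe_set_eq, Set.ncard_eq_toFinset_card _ (hGfin n)]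
    rw [h0, hcard n]
  -- enumerations
  let eL : Fin m ≃ {x // x ∈ hfin.toFinset} :=
    (finCongr hRLcard.symm).trans (hfin.toFinset.equivFin).symm
  let en : ∀ n, Fin m ≃ {x // x ∈ (hGfin n).toFinset} := fun n =>
    (finCongr (hRncard n).symm).trans ((hGfin n).toFinset.equivFin).symm
  -- the data for the analysis lemma
  set u : ℕ → Fin m → Fin k → ℝ := fun n j i => stoneGR (fV n) (G n) (φ i) (en n j : V n)
    with hu
  set v : Fin m → Fin k → ℝ := fun j i => stoneLR L ν (φ i) (eL j : W) with hv
  have hu0 : ∀ n j i, 0 ≤ u n j i := fun n j i => stoneGR_nonneg _ _ _ _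
  have hu1 : ∀ n j i, u n j i ≤ 1 := fun n j i => stoneGR_le_one _ (hVne n) _ _ _
  have hv0 : ∀ j i, 0 ≤ v j i := fun j i => stoneLR_nonneg _ _ _ _
  have hv1 : ∀ j i, v j i ≤ 1 := fun j i => stoneLR_le_one _ _ _ _
  -- moment convergence
  have hmom : ∀ e : Fin k → ℕ, Tendsto (fun n => ∑ j, ∏ i, u n j i ^ e i) atTop
      (nhds (∑ j, ∏ i, v j i ^ e i)) := by
    intro e
    have hGn : ∀ n, ∑ j, ∏ i, u n j i ^ e i
        = ∑ j ∈ Finset.Icc 1 m, stoneG (fV n) (G n) (thetaFin ps φ ξ e j) := by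
      intro n
      have h1 := sumG ps φ ξ e (G n) (fV n) (hGfin n)
      rw [hRncard n] at h1
      rw [h1]
      calc ∑ j, ∏ i, u n j i ^ e i
          = ∑ x : {x // x ∈ (hGfin n).toFinset},
              ∏ i, stoneGR (fV n) (G n) (φ i) (x : V n) ^ e i :=
            Equiv.sum_comp (en n) (fun x => ∏ i, stoneGR (fV n) (G n) (φ i) (x : V n) ^ e i)
        _ = ∑ r ∈ (hGfin n).toFinset, ∏ i, stoneGR (fV n) (G n) (φ i) r ^ e i :=
            Finset.sum_coe_sort (hGfin n).toFinset
              (fun r => ∏ i, stoneGR (fV n) (G n) (φ i) r ^ e i)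
    have hLn : ∑ j, ∏ i, v j i ^ e i
        = ∑ j ∈ Finset.Icc 1 m, stoneL L ν (thetaFin ps φ ξ e j) := by
      have h1 := sumL ps φ ξ e L hmeas ν hfin
      rw [hRLcard] at h1
      rw [h1]
      calc ∑ j, ∏ i, v j i ^ e i
          = ∑ x : {x // x ∈ hfin.toFinset},
              ∏ i, stoneLR L ν (φ i) (x : W) ^ e i :=
            Equiv.sum_comp eL (fun x => ∏ i, stoneLR L ν (φ i) (x : W) ^ e i)
        _ = ∑ r ∈ hfin.toFinset, ∏ i, stoneLR L ν (φ i) r ^ e i :=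
            Finset.sum_coe_sort hfin.toFinset
              (fun r => ∏ i, stoneLR L ν (φ i) r ^ e i)
    simp_rw [hGn]
    rw [hLn]
    exact tendsto_finset_sum _ fun j _ =>
      hlim (Fintype.card (Bt ps e)) (thetaFin ps φ ξ e j)
  -- apply the selection lemma
  obtain ⟨sel, hsel⟩ := lemmaA u v hu0 hu1 hv0 hv1 hmom ⟨0, hmpos⟩
  refine ⟨fun n => (en n (sel n) : V n), (eL ⟨0, hmpos⟩ : W), ?_, ?_, ?_⟩
  · intro n
    have := (en n (sel n)).2
    rwa [Set.Finite.mem_toFinset] at this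
  · have := (eL ⟨0, hmpos⟩).2
    rwa [Set.Finite.mem_toFinset] at this
  · intro i
    exact hsel i
end

section
/- Let M be a finite set with m elements, and let μ and μ' be two probability distributions on the power set of M. If Pr_μ[F_ℓ^k] = Pr_{μ'}[F_ℓ^k] for every ℓ ∈ {0,1,…,m} and every k ∈ {1,…,binom(m,ℓ)}, then for every ℓ ∈ {0,1,…,m} the multisets A_ℓ(μ) and A_ℓ(μ') are equal; that is, there exists a bijection σ_ℓ of the ℓ-element subsets of M such that μ(X^↑) = μ'(σ_ℓ(X)^↑) for every ℓ-element subset X of M. -/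
/-!
Write `E_j(k) = Pr_μ[|X_1 ∩ ⋯ ∩ X_k| = j]`. Expanding `μ(X^↑)^k` over `k`-tuples gives
`∑_{|X| = ℓ} μ(X^↑)^k = ∑_j binom(j, ℓ) E_j(k)`, while `Pr_μ[F_ℓ^k] = ∑_{j ≥ ℓ} E_j(k)`.
We show by downward induction on `ℓ` that `E_ℓ(k)` agrees for `μ` and `μ'` for every `k`.
Given this for all `j > ℓ`, the values `Pr[F_ℓ^k]` for `k ≤ binom(m, ℓ) = |A_ℓ|` yield the first
`|A_ℓ|` power sums of `A_ℓ`; by Newton's identities these determine the multiset `A_ℓ`, hence all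
of its power sums, hence `E_ℓ(k)` for every `k`.
-/

open Finset

/-- `μ(X^↑)`: the mass that the distribution `μ` on the power set of `M` gives to the
filter generated by `X`, i.e. `∑_{Y ⊇ X} μ({Y})`. -/
def filterMass {M : Type} [Fintype M] [DecidableEq M] (μ : Finset M → ℝ) (X : Finset M) : ℝ :=
  ∑ Y ∈ Finset.univ.filter (fun Y => X ⊆ Y), μ Y

/-- `Pr_μ[F_ℓ^k]`: the probability that `k` independent `μ`-random subsets of `M`
have intersection of size at least `ℓ`. -/
def prF {M : Type} [Fintype M] [DecidableEq M] (μ : Finset M → ℝ) (ℓ k : ℕ) : ℝ :=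
  ∑ X : Fin k → Finset M,
    if ℓ ≤ (Finset.univ.inf X).card then ∏ i, μ (X i) else 0

theorem Multiset.eq_of_card_eq_of_esymm_eq {R : Type*} [CommRing R] [IsDomain R]
    {s t : Multiset R} (hcard : card s = card t) (h : ∀ k ≤ card s, s.esymm k = t.esymm k) :
    s = t := by
  have hprod : (s.map fun r => Polynomial.X - Polynomial.C r).prod
      = (t.map fun r => Polynomial.X - Polynomial.C r).prod := by
    ext i
    rcases le_or_gt i (card s) with hi | hi
    · rw [Multiset.prod_X_sub_C_coeff s hi, Multiset.prod_X_sub_C_coeff t (hcard ▸ hi), hcard,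
        h _ (by omega)]
    · rw [Polynomial.coeff_eq_zero_of_natDegree_lt (by
          rwa [Polynomial.natDegree_multiset_prod_X_sub_C_eq_card]),
        Polynomial.coeff_eq_zero_of_natDegree_lt (by
          rwa [Polynomial.natDegree_multiset_prod_X_sub_C_eq_card, ← hcard])]
  simpa only [Polynomial.roots_multiset_prod_X_sub_C] using congrArg Polynomial.roots hprod

theorem esymm_map_univ_eq_of_sum_pow_eq {α R : Type*} [Fintype α] [CommRing R] [IsDomain R]
    [CharZero R] (f g : α → R)
    (h : ∀ k, 1 ≤ k → k ≤ Fintype.card α → ∑ x, f x ^ k = ∑ x, g x ^ k) :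
    ∀ k ≤ Fintype.card α, (univ.val.map f).esymm k = (univ.val.map g).esymm k := by
  have aeval_psum (u : α → R) (j : ℕ) :
      MvPolynomial.aeval u (MvPolynomial.psum α R j) = ∑ x, u x ^ j := by
    simp [MvPolynomial.psum]
  intro k
  induction k using Nat.strong_induction_on with
  | _ k ih =>
    intro hk
    rcases Nat.eq_zero_or_pos k with rfl | hk0
    · simp [Multiset.esymm]
    -- Newton's identities express `k • e_k` through the `e_i` and power sums with `i < k`.
    have newton (u : α → R) :=
      congrArg (MvPolynomial.aeval u) (MvPolynomial.mul_esymm_eq_sum α R k)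
    have hf := newton f
    have hg := newton g
    simp only [map_mul, map_natCast, map_sum, map_pow, map_neg, map_one,
      MvPolynomial.aeval_esymm_eq_multiset_esymm, aeval_psum] at hf hg
    have hlower : ∀ a ∈ (antidiagonal k).filter (·.1 < k),
        (-1 : R) ^ a.1 * (univ.val.map f).esymm a.1 * ∑ x, f x ^ a.2
          = (-1 : R) ^ a.1 * (univ.val.map g).esymm a.1 * ∑ x, g x ^ a.2 := by
      intro a ha
      rw [mem_filter, HasAntidiagonal.mem_antidiagonal] at ha
      rw [ih a.1 ha.2 (by omega), h a.2 (by omega) (by omega)]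
    refine mul_left_cancel₀ (Nat.cast_ne_zero.mpr hk0.ne' : (k : R) ≠ 0) ?_
    rw [hf, hg, sum_congr rfl hlower]

theorem map_univ_eq_of_sum_pow_eq {α R : Type*} [Fintype α] [CommRing R] [IsDomain R]
    [CharZero R] (f g : α → R)
    (h : ∀ k, 1 ≤ k → k ≤ Fintype.card α → ∑ x, f x ^ k = ∑ x, g x ^ k) :
    univ.val.map f = univ.val.map g :=
  Multiset.eq_of_card_eq_of_esymm_eq (by simp) fun k hk =>
    esymm_map_univ_eq_of_sum_pow_eq f g h k (by simpa using hk)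

theorem exists_equiv_of_map_univ_eq {α β : Type*} [Fintype α] (f g : α → β)
    (h : univ.val.map f = univ.val.map g) : ∃ σ : α ≃ α, ∀ x, f x = g (σ x) := by
  classical
  have hfiber (c : β) : Fintype.card {x // f x = c} = Fintype.card {x // g x = c} := by
    have hc := congrArg (Multiset.count c) h
    simp only [Multiset.count_map] at hc
    simpa [Fintype.card_subtype, Finset.card, eq_comm] using hc
  exact ⟨Equiv.ofFiberEquiv fun c => Fintype.equivOfCardEq (hfiber c),
    fun x => (Equiv.ofFiberEquiv_map _ x).symm⟩

section IntersectionSize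

variable {M : Type} [Fintype M] [DecidableEq M]

/-- `Pr_μ[|X_1 ∩ ⋯ ∩ X_k| = j]` for independent `μ`-random `X_1, …, X_k`. -/
def prExact (μ : Finset M → ℝ) (j k : ℕ) : ℝ :=
  ∑ X : Fin k → Finset M, if (univ.inf X).card = j then ∏ i, μ (X i) else 0

theorem weight_eq_ite_add_sum_Ioc (w : ℕ → ℝ) {ℓ m c : ℕ} (hw : ∀ j < ℓ, w j = 0)
    (hwℓ : w ℓ = 1) (hc : c ≤ m) :
    w c = (if c = ℓ then 1 else 0) + ∑ j ∈ Ioc ℓ m, w j * if c = j then 1 else 0 := by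
  simp only [mul_boole, sum_ite_eq, mem_Ioc]
  rcases lt_trichotomy c ℓ with hlt | rfl | hgt
  · simp [hw c hlt, hlt.ne, hlt.not_gt]
  · simp [hwℓ]
  · simp [hgt.ne', hgt, hc]

theorem sum_weight_card_inf_mul_prod (μ : Finset M → ℝ) (w : ℕ → ℝ) {ℓ : ℕ}
    (hw : ∀ j < ℓ, w j = 0) (hwℓ : w ℓ = 1) (k : ℕ) :
    ∑ X : Fin k → Finset M, w (univ.inf X).card * ∏ i, μ (X i)
      = prExact μ ℓ k + ∑ j ∈ Ioc ℓ (Fintype.card M), w j * prExact μ j k := by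
  simp_rw [fun X : Fin k → Finset M =>
    weight_eq_ite_add_sum_Ioc w hw hwℓ (card_le_univ (univ.inf X)), add_mul, sum_add_distrib,
    sum_mul, prExact, mul_sum, mul_assoc, boole_mul]
  rw [sum_comm]

theorem prF_eq_prExact_add_sum (μ : Finset M → ℝ) (ℓ k : ℕ) :
    prF μ ℓ k = prExact μ ℓ k + ∑ j ∈ Ioc ℓ (Fintype.card M), prExact μ j k := by
  have h := sum_weight_card_inf_mul_prod μ (fun c => if ℓ ≤ c then 1 else 0)
    (fun j hj => if_neg (not_le.mpr hj)) (if_pos le_rfl) k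
  simp only [boole_mul] at h
  rw [prF, h]
  congr 1
  exact sum_congr rfl fun j hj => by rw [if_pos (mem_Ioc.mp hj).1.le]

theorem filterMass_pow (μ : Finset M → ℝ) (X : Finset M) (k : ℕ) :
    filterMass μ X ^ k
      = ∑ Y : Fin k → Finset M, if X ⊆ univ.inf Y then ∏ i, μ (Y i) else 0 := by
  rw [filterMass, sum_filter, sum_pow', Fintype.piFinset_univ]
  refine sum_congr rfl fun Y _ => ?_
  rw [Fintype.prod_ite_zero]
  simp [Finset.le_inf_iff]

theorem sum_filterMass_pow (μ : Finset M → ℝ) (ℓ k : ℕ) :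
    ∑ X : {X : Finset M // X.card = ℓ}, filterMass μ X.1 ^ k
      = prExact μ ℓ k + ∑ j ∈ Ioc ℓ (Fintype.card M), (j.choose ℓ : ℝ) * prExact μ j k := by
  rw [← sum_weight_card_inf_mul_prod μ (fun c => (c.choose ℓ : ℝ))
    (fun j hj => by simp [Nat.choose_eq_zero_of_lt hj]) (by simp),
    ← sum_subtype (powersetCard ℓ univ) (fun _ => mem_powersetCard_univ) (filterMass μ · ^ k)]
  simp_rw [filterMass_pow]
  rw [sum_comm]
  refine sum_congr rfl fun Y _ => ?_
  rw [← sum_filter, sum_const, nsmul_eq_mul, ← card_powersetCard ℓ (univ.inf Y)]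
  congr 3
  ext X
  simp [mem_powersetCard, and_comm]

theorem prExact_eq_of_forall_gt (μ μ' : Finset M → ℝ) {ℓ : ℕ}
    (hgt : ∀ j ∈ Ioc ℓ (Fintype.card M), ∀ k, 1 ≤ k → prExact μ j k = prExact μ' j k)
    (hprF : ∀ k, 1 ≤ k → k ≤ (Fintype.card M).choose ℓ → prF μ ℓ k = prF μ' ℓ k) :
    ∀ k, 1 ≤ k → prExact μ ℓ k = prExact μ' ℓ k := by
  have hsum (c : ℕ → ℝ) {k : ℕ} (hk : 1 ≤ k) :
      ∑ j ∈ Ioc ℓ (Fintype.card M), c j * prExact μ j k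
        = ∑ j ∈ Ioc ℓ (Fintype.card M), c j * prExact μ' j k :=
    sum_congr rfl fun j hj => by rw [hgt j hj k hk]
  have hpow_le : ∀ k, 1 ≤ k → k ≤ Fintype.card {X : Finset M // X.card = ℓ} →
      ∑ X : {X : Finset M // X.card = ℓ}, filterMass μ X.1 ^ k
        = ∑ X : {X : Finset M // X.card = ℓ}, filterMass μ' X.1 ^ k := by
    intro k hk hkc
    rw [Fintype.card_finset_len] at hkc
    have hexact : prExact μ ℓ k = prExact μ' ℓ k := by
      have h := hprF k hk hkc
      rwa [prF_eq_prExact_add_sum, prF_eq_prExact_add_sum,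
        sum_congr rfl fun j hj => hgt j hj k hk, add_left_inj] at h
    rw [sum_filterMass_pow, sum_filterMass_pow, hexact, hsum _ hk]
  have hmap := map_univ_eq_of_sum_pow_eq _ _ hpow_le
  intro k hk
  have hpow := congrArg (fun s : Multiset ℝ => (s.map (· ^ k)).sum) hmap
  simpa only [Multiset.map_map, Function.comp_def, ← sum_eq_multiset_sum,
    sum_filterMass_pow, hsum _ hk, add_left_inj] using hpow

theorem prExact_eq_of_prF_eq (μ μ' : Finset M → ℝ)
    (h : ∀ ℓ ≤ Fintype.card M, ∀ k, 1 ≤ k → k ≤ (Fintype.card M).choose ℓ →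
      prF μ ℓ k = prF μ' ℓ k) :
    ∀ ℓ ≤ Fintype.card M, ∀ k, 1 ≤ k → prExact μ ℓ k = prExact μ' ℓ k := by
  intro ℓ hℓ
  induction hd : Fintype.card M - ℓ using Nat.strong_induction_on generalizing ℓ with
  | _ d ih =>
    subst hd
    refine prExact_eq_of_forall_gt μ μ' (fun j hj => ?_) (h ℓ hℓ)
    rw [mem_Ioc] at hj
    exact ih _ (by omega) j hj.2 rfl

end IntersectionSize

theorem prF_determines_filter_masses_general
    {M : Type} [Fintype M] [DecidableEq M] (m : ℕ) (hm : Fintype.card M = m)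
    (μ μ' : Finset M → ℝ)
    (heq : ∀ ℓ ≤ m, ∀ k, 1 ≤ k → k ≤ m.choose ℓ → prF μ ℓ k = prF μ' ℓ k) :
    ∀ ℓ ≤ m, ∃ σ : {X : Finset M // X.card = ℓ} ≃ {X : Finset M // X.card = ℓ},
      ∀ X : {X : Finset M // X.card = ℓ}, filterMass μ X.1 = filterMass μ' (σ X).1 := by
  subst hm
  have hexact := prExact_eq_of_prF_eq μ μ' heq
  intro ℓ hℓ
  refine exists_equiv_of_map_univ_eq
    (fun X : {X : Finset M // X.card = ℓ} => filterMass μ X.1) (fun X => filterMass μ' X.1)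
    (map_univ_eq_of_sum_pow_eq _ _ fun k hk _ => ?_)
  rw [sum_filterMass_pow, sum_filterMass_pow, hexact ℓ hℓ k hk]
  congr 1
  exact sum_congr rfl fun j hj => by rw [hexact j (mem_Ioc.mp hj).2 k hk]

/-- If two probability distributions on the power set of an `m`-element set
give the same probabilities `Pr[F_ℓ^k]` for all `ℓ ∈ [m]₀` and `k ∈ [binom(m,ℓ)]`, then for
each `ℓ` the multisets `A_ℓ = {μ(X^↑) : |X| = ℓ}` coincide. -/
theorem prF_determines_filter_masses
    {M : Type} [Fintype M] [DecidableEq M] (m : ℕ) (hm : Fintype.card M = m)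
    (μ μ' : Finset M → ℝ)
    (hμ0 : ∀ X, 0 ≤ μ X) (hμ1 : ∑ X : Finset M, μ X = 1)
    (hμ'0 : ∀ X, 0 ≤ μ' X) (hμ'1 : ∑ X : Finset M, μ' X = 1)
    (heq : ∀ ℓ ≤ m, ∀ k, 1 ≤ k → k ≤ m.choose ℓ → prF μ ℓ k = prF μ' ℓ k) :
    ∀ ℓ ≤ m, ∃ σ : {X : Finset M // X.card = ℓ} ≃ {X : Finset M // X.card = ℓ},
      ∀ X : {X : Finset M // X.card = ℓ}, filterMass μ X.1 = filterMass μ' (σ X).1 :=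
  prF_determines_filter_masses_general m hm μ μ' heq
end

section
/- Let A_1,…,A_k be finite nonempty subsets of the real interval (0,1]. Then there exists a vector e = (e_1,…,e_k) of positive integers such that the map (a_1,…,a_k) ↦ a_1^{e_1}·a_2^{e_2}⋯a_k^{e_k} is injective on the Cartesian product A_1 × A_2 × ⋯ × A_k; that is, for all tuples a,b in the product, if ∏_{i=1}^k a_i^{e_i} = ∏_{i=1}^k b_i^{e_i} then a_i = b_i for every i. -/
/-!
Taking logarithms turns the product into the linear form `∑ eᵢ log aᵢ`, so it suffices to find
positive integer weights separating the finitely many log-vectors. With `eᵢ = mⁱ`, two vectors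
`u ≠ v` collide exactly when `m` is a root of the nonzero polynomial with coefficients `u - v`;
there are only finitely many such roots, so almost every `m` works.
-/

open Polynomial Filter

namespace Polynomial

theorem eval_ofFn {R : Type*} [CommSemiring R] [DecidableEq R] {n : ℕ} (v : Fin n → R) (x : R) :
    (ofFn n v).eval x = ∑ i, v i * x ^ (i : ℕ) := by
  simp only [ofFn_eq_sum_monomial, eval_finsetSum, eval_monomial]

end Polynomial

section Weights

variable {R : Type*} [CommRing R] [IsDomain R] [CharZero R] {n : ℕ}

theorem eventually_forall_sum_mul_pow_ne_zero (S : Finset (Fin n → R)) (hS : ∀ v ∈ S, v ≠ 0) :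
    ∀ᶠ m : ℕ in atTop, ∀ v ∈ S, ∑ i, v i * (m : R) ^ (i : ℕ) ≠ 0 := by
  classical
  refine (eventually_all_finset S).2 fun v hv => ?_
  have hp : ofFn n v ≠ 0 := by
    rw [← (ofFn n).map_zero]
    exact (injective_ofFn n).ne (hS v hv)
  have hroots : {m : ℕ | (ofFn n v).IsRoot m}.Finite :=
    (finite_setOfPred_isRoot hp).preimage Nat.cast_injective.injOn
  rw [← Nat.cofinite_eq_atTop]
  filter_upwards [hroots.eventually_cofinite_notMem] with m hm
  simpa [IsRoot, eval_ofFn] using hm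

theorem exists_pos_weights_injOn_sum_mul (S : Finset (Fin n → R)) :
    ∃ w : Fin n → ℕ, (∀ i, 0 < w i) ∧
      Set.InjOn (fun v : Fin n → R => ∑ i, (w i : R) * v i) S := by
  classical
  let D := ((S ×ˢ S).image fun p => p.1 - p.2).filter (· ≠ 0)
  obtain ⟨m, hm, hpos⟩ := ((eventually_forall_sum_mul_pow_ne_zero D fun _ hv =>
    (Finset.mem_filter.1 hv).2).and (eventually_gt_atTop 0)).exists
  refine ⟨fun i => m ^ (i : ℕ), fun i => pow_pos hpos _, fun u hu v hv huv => ?_⟩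
  by_contra hne
  have hD : u - v ∈ D :=
    Finset.mem_filter.2 ⟨Finset.mem_image.2 ⟨(u, v), Finset.mem_product.2 ⟨hu, hv⟩, rfl⟩,
      sub_ne_zero.2 hne⟩
  apply hm _ hD
  simp only [Pi.sub_apply, sub_mul, Finset.sum_sub_distrib, mul_comm (u _), mul_comm (v _)]
  exact sub_eq_zero.2 (by exact_mod_cast huv)

end Weights

theorem Real.log_prod_pow {ι : Type*} (s : Finset ι) (a : ι → ℝ) (e : ι → ℕ)
    (ha : ∀ i ∈ s, a i ≠ 0) : Real.log (∏ i ∈ s, a i ^ e i) = ∑ i ∈ s, e i * Real.log (a i) := by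
  rw [Real.log_prod fun i hi => pow_ne_zero _ (ha i hi)]
  simp only [Real.log_pow]

theorem exists_separating_exponents_general
    (k : ℕ) (A : Fin k → Finset ℝ)
    (hsub : ∀ i, ∀ a ∈ A i, a ∈ Set.Ioc (0 : ℝ) 1) :
    ∃ e : Fin k → ℕ, (∀ i, 0 < e i) ∧
      ∀ a b : Fin k → ℝ, (∀ i, a i ∈ A i) → (∀ i, b i ∈ A i) →
        (∏ i, a i ^ e i) = (∏ i, b i ^ e i) → ∀ i, a i = b i := by
  classical
  let logVec : (Fin k → ℝ) → Fin k → ℝ := fun a i => Real.log (a i)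
  obtain ⟨e, he, hinj⟩ :=
    exists_pos_weights_injOn_sum_mul ((Fintype.piFinset A).image logVec)
  refine ⟨e, he, fun a b ha hb hprod i => ?_⟩
  have hpos : ∀ c : Fin k → ℝ, (∀ i, c i ∈ A i) → ∀ i, 0 < c i := fun c hc i =>
    (hsub i _ (hc i)).1
  have hmem : ∀ c : Fin k → ℝ, (∀ i, c i ∈ A i) → logVec c ∈ (Fintype.piFinset A).image logVec :=
    fun c hc => Finset.mem_image_of_mem _ (Fintype.mem_piFinset.2 hc)
  have hlog : logVec a = logVec b := by
    refine hinj (hmem a ha) (hmem b hb) ?_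
    simpa only [Real.log_prod_pow _ _ _ fun j _ => (hpos a ha j).ne',
      Real.log_prod_pow _ _ _ fun j _ => (hpos b hb j).ne'] using congrArg Real.log hprod
  exact Real.log_injOn_pos (hpos a ha i) (hpos b hb i) (congrFun hlog i)

/-- For finite nonempty sets `A₁,…,A_k ⊆ (0,1]` there is a vector of positive
integer exponents `e` making `(a₁,…,a_k) ↦ ∏ aᵢ^{eᵢ}` injective on `A₁ × ⋯ × A_k`. -/
theorem exists_separating_exponents
    (k : ℕ) (A : Fin k → Finset ℝ)
    (hne : ∀ i, (A i).Nonempty)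
    (hsub : ∀ i, ∀ a ∈ A i, a ∈ Set.Ioc (0 : ℝ) 1) :
    ∃ e : Fin k → ℕ, (∀ i, 0 < e i) ∧
      ∀ a b : Fin k → ℝ, (∀ i, a i ∈ A i) → (∀ i, b i ∈ A i) →
        (∏ i, a i ^ e i) = (∏ i, b i ^ e i) → ∀ i, a i = b i :=
  exists_separating_exponents_general k A hsub
end
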